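/- arXiv:2002.06384 — 6 statements merged into one kernel-verified Lean document; each statement's English description precedes it below -/
import Mathlib

section
/- Let G be a topologically 2-generated profinite group and x ∈ G. Then x is a non-isolated vertex of the generating graph of G (i.e., there exists y ∈ G with the closed subgroup generated by {g, y} equal to G) if and only if for every open normal subgroup N of G, the image xN is a non-isolated vertex of the generating graph of the finite group G/N. -/
open Subgroup

/-- A set that is a union of left cosets of an open subgroup is open. -/
private lemma isOpen_of_coset_invariant {G : Type*} [Group G] [TopologicalSpace G]
    [IsTopologicalGroup G] {N : Subgroup G} (hN : IsOpen (N : Set G)) {S : Set G}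
    (hS : ∀ y ∈ S, ∀ n ∈ N, y * n ∈ S) : IsOpen S := by
  rw [isOpen_iff_mem_nhds]
  intro y hy
  have h1 : IsOpen ((y * ·) '' (N : Set G)) :=
    (Homeomorph.mulLeft y).isOpenMap _ hN
  have h2 : y ∈ (y * ·) '' (N : Set G) := ⟨1, N.one_mem, mul_one y⟩
  refine Filter.mem_of_superset (h1.mem_nhds h2) ?_
  rintro _ ⟨n, hn, rfl⟩
  exact hS y hy n hn

/-- If the images of x, y generate `G ⧸ N` with `N` open, and they generate `G ⧸ M`
with `M ≤ N`, then... (forward/monotone direction helper). -/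
private lemma gen_mono {G : Type*} [Group G] {M N : Subgroup G} [M.Normal] [N.Normal]
    (h : M ≤ N) (x y : G)
    (hgen : Subgroup.closure {(x : G ⧸ M), (y : G ⧸ M)} = ⊤) :
    Subgroup.closure {(x : G ⧸ N), (y : G ⧸ N)} = ⊤ := by
  let f : G ⧸ M →* G ⧸ N := QuotientGroup.map M N (MonoidHom.id G) (by simpa using h)
  have hf : Function.Surjective f := by
    intro z
    obtain ⟨g, rfl⟩ := QuotientGroup.mk_surjective z
    exact ⟨(g : G ⧸ M), rfl⟩
  have := congrArg (Subgroup.map f) hgen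
  rw [MonoidHom.map_closure] at this
  have himg : f '' {((x : G ⧸ M)), ((y : G ⧸ M))} = {(x : G ⧸ N), (y : G ⧸ N)} := by
    simp [Set.image_insert_eq, f]
  rw [himg] at this
  rw [this, Subgroup.map_top_of_surjective f hf]

/-- In a topologically 2-generated profinite group, `x` is a non-isolated vertex of the
generating graph if and only if its image is non-isolated in the generating graph of every
finite quotient by an open normal subgroup. -/
theorem stmt_5 {G : Type*} [Group G] [TopologicalSpace G] [IsTopologicalGroup G]
    [CompactSpace G] [T2Space G] [TotallyDisconnectedSpace G]
    (h2 : ∃ a b : G, (Subgroup.closure {a, b}).topologicalClosure = ⊤)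
    (x : G) :
    (∃ y : G, (Subgroup.closure {x, y}).topologicalClosure = ⊤) ↔
      ∀ (N : Subgroup G) [N.Normal], IsOpen (N : Set G) →
        ∃ z : G ⧸ N, Subgroup.closure {(x : G ⧸ N), z} = ⊤ := by
  constructor
  · rintro ⟨y, hy⟩ N _ hN
    refine ⟨(y : G ⧸ N), ?_⟩
    -- comap of the closure is an open (hence closed) subgroup containing closure {x,y}
    set K : Subgroup G := Subgroup.comap (QuotientGroup.mk' N)
      (Subgroup.closure {(x : G ⧸ N), (y : G ⧸ N)}) with hK
    have hle : Subgroup.closure {x, y} ≤ K := by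
      rw [Subgroup.closure_le]
      rintro g (rfl | rfl)
      · exact Subgroup.subset_closure (by simp)
      · exact Subgroup.subset_closure (by simp)
    have hNK : N ≤ K := fun n hn => by
      simp only [hK, Subgroup.mem_comap, QuotientGroup.mk'_apply,
        QuotientGroup.eq_one_iff n |>.mpr hn]
      exact Subgroup.one_mem _
    have hKopen : IsOpen (K : Set G) := Subgroup.isOpen_mono hNK hN
    have hKclosed : IsClosed (K : Set G) := K.isClosed_of_isOpen hKopen
    have hKtop : K = ⊤ := by
      rw [← top_le_iff, ← hy]
      exact Subgroup.topologicalClosure_minimal _ hle hKclosed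
    have := Subgroup.comap_injective (f := QuotientGroup.mk' N)
      (QuotientGroup.mk'_surjective N)
    exact this (by rw [← hK, hKtop, Subgroup.comap_top])
  · intro h
    -- index type: open normal subgroups
    let Λ := {N : Subgroup G // N.Normal ∧ IsOpen (N : Set G)}
    have : Nonempty Λ := ⟨⟨⊤, inferInstance, by simp⟩⟩
    let Y : Λ → Set G := fun N =>
      {y : G | haveI := N.2.1
        Subgroup.closure {((x : G ⧸ N.1)), ((y : G ⧸ N.1))} = ⊤}
    have hYcoset : ∀ (N : Λ) (y : G), y ∈ Y N → ∀ n ∈ N.1, y * n ∈ Y N := by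
      rintro N y hy n hn
      haveI := N.2.1
      have : ((y * n : G) : G ⧸ N.1) = (y : G ⧸ N.1) := by
        rw [QuotientGroup.mk_mul, (QuotientGroup.eq_one_iff n).mpr hn, mul_one]
      simpa only [Y, Set.mem_setOf_eq, this] using hy
    have hYopen : ∀ N : Λ, IsOpen (Y N) := fun N =>
      isOpen_of_coset_invariant N.2.2 (hYcoset N)
    have hYclosed : ∀ N : Λ, IsClosed (Y N) := by
      intro N
      rw [← isOpen_compl_iff]
      refine isOpen_of_coset_invariant N.2.2 ?_
      intro y hy n hn hmem
      exact hy (by simpa using hYcoset N _ hmem n⁻¹ (N.1.inv_mem hn))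
    have hYne : ∀ N : Λ, (Y N).Nonempty := by
      rintro ⟨N, hnorm, hopen⟩
      haveI := hnorm
      obtain ⟨z, hz⟩ := h N hopen
      obtain ⟨y, rfl⟩ := QuotientGroup.mk_surjective z
      exact ⟨y, hz⟩
    have hdir : Directed (· ⊇ ·) Y := by
      rintro M N
      haveI := M.2.1; haveI := N.2.1
      refine ⟨⟨M.1 ⊓ N.1, inferInstance, M.2.2.inter N.2.2⟩, ?_, ?_⟩
      · intro y hy
        haveI : (M.1 ⊓ N.1).Normal := inferInstance
        exact gen_mono inf_le_left x y hy
      · intro y hy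
        haveI : (M.1 ⊓ N.1).Normal := inferInstance
        exact gen_mono inf_le_right x y hy
    obtain ⟨y, hy⟩ := IsCompact.nonempty_iInter_of_directed_nonempty_isCompact_isClosed
      Y hdir hYne (fun N => (hYclosed N).isCompact) hYclosed
    refine ⟨y, ?_⟩
    -- show the closure of ⟨x, y⟩ is dense
    rw [← top_le_iff]
    intro g _
    rw [Subgroup.topologicalClosure, Subgroup.mem_mk]
    show g ∈ _root_.closure ((Subgroup.closure {x, y} : Subgroup G) : Set G)
    rw [mem_closure_iff]
    intro U hU hgU
    obtain ⟨V, hVclopen, hV1, hVU⟩ := compact_exists_isClopen_in_isOpen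
      ((Homeomorph.mulLeft g).isOpen_preimage.mpr hU)
      (show (1:G) ∈ ⇑(Homeomorph.mulLeft g) ⁻¹' U by
        simpa using hgU)
    obtain ⟨H, hH⟩ := IsTopologicalGroup.exist_openNormalSubgroup_sub_clopen_nhds_of_one
      hVclopen hV1
    haveI := H.isNormal'
    have hyH : y ∈ Y ⟨H.toSubgroup, H.isNormal', H.isOpen⟩ := Set.mem_iInter.mp hy _
    -- the images of x, y generate G ⧸ H, so some element of ⟨x,y⟩ lies in g•H
    have hgenH : Subgroup.closure {((x : G ⧸ H.toSubgroup)), ((y : G ⧸ H.toSubgroup))} = ⊤ := hyH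
    have hg' : (g : G ⧸ H.toSubgroup) ∈
        Subgroup.map (QuotientGroup.mk' H.toSubgroup) (Subgroup.closure {x, y}) := by
      rw [MonoidHom.map_closure]
      have : (QuotientGroup.mk' H.toSubgroup) '' {x, y} =
          {((x : G ⧸ H.toSubgroup)), ((y : G ⧸ H.toSubgroup))} := by
        simp [Set.image_insert_eq]
      rw [this, hgenH]
      trivial
    obtain ⟨w, hw, hwg⟩ := hg'
    refine ⟨w, ?_, hw⟩
    have : (g⁻¹ * w : G) ∈ (H.toOpenSubgroup : Subgroup G) := by
      refine (QuotientGroup.eq_one_iff _).mp ?_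
      rw [QuotientGroup.mk_mul]
      simp only [QuotientGroup.mk'_apply] at hwg
      rw [hwg]
      simp
    have hmem : g⁻¹ * w ∈ (g * ·) ⁻¹' U := hVU (hH this)
    simpa using hmem
end

section
/- Let G be a topologically 2-generated profinite group. Then the set V(G) of non-isolated vertices of the generating graph of G, i.e., V(G) = {x ∈ G : ∃ y, the closed subgroup generated by {x, y} equals G}, is a closed subset of G. -/
open Subgroup

section Aux

variable {G : Type*} [Group G] [TopologicalSpace G] [IsTopologicalGroup G]

/-- A set saturated under right multiplication by an open subgroup is open. -/
lemma aux_open_of_saturated {N : Subgroup G} (hN : IsOpen (N : Set G)) {S : Set G}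
    (h : ∀ x ∈ S, ∀ n ∈ N, x * n ∈ S) : IsOpen S := by
  rw [isOpen_iff_forall_mem_open]
  intro x hx
  refine ⟨(fun n => x * n) '' N, ?_, ?_, ?_⟩
  · rintro _ ⟨n, hn, rfl⟩; exact h x hx n hn
  · exact (Homeomorph.mulLeft x).isOpenMap _ hN
  · exact ⟨1, one_mem N, mul_one x⟩

lemma aux_join_invL {N : Subgroup G} {x y n : G} (hn : n ∈ N) :
    Subgroup.closure {x * n, y} ⊔ N = Subgroup.closure {x, y} ⊔ N := by
  have key : ∀ a b m : G, m ∈ N →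
      Subgroup.closure {a * m, b} ⊔ N ≤ Subgroup.closure {a, b} ⊔ N := by
    intro a b m hm
    refine sup_le ((Subgroup.closure_le _).2 ?_) le_sup_right
    rintro z (rfl | rfl)
    · exact mul_mem (SetLike.le_def.1 le_sup_left (subset_closure (by simp)))
        (SetLike.le_def.1 le_sup_right hm)
    · exact SetLike.le_def.1 le_sup_left (subset_closure (by simp))
  refine le_antisymm (key x y n hn) ?_
  have := key (x * n) y n⁻¹ (inv_mem hn)
  simpa [mul_assoc] using this

lemma aux_join_invR {N : Subgroup G} {x y n : G} (hn : n ∈ N) :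
    Subgroup.closure {x, y * n} ⊔ N = Subgroup.closure {x, y} ⊔ N := by
  rw [Set.pair_comm x (y * n), aux_join_invL hn, Set.pair_comm y x]

end Aux

/-- In a topologically 2-generated profinite group, the set of non-isolated vertices of
the generating graph is closed. -/
theorem stmt_6 {G : Type*} [Group G] [TopologicalSpace G] [IsTopologicalGroup G]
    [CompactSpace G] [T2Space G] [TotallyDisconnectedSpace G]
    (h2 : ∃ a b : G, (Subgroup.closure {a, b}).topologicalClosure = ⊤) :
    IsClosed {x : G | ∃ y : G, (Subgroup.closure {x, y}).topologicalClosure = ⊤} := by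
  clear h2
  -- the index type of open normal subgroups
  let I := {N : Subgroup G // IsOpen (N : Set G) ∧ N.Normal}
  have hItop : IsOpen ((⊤ : Subgroup G) : Set G) := by
    simpa using isOpen_univ
  have : Nonempty I := ⟨⟨⊤, hItop, inferInstance⟩⟩
  -- every open neighborhood of `1` contains an open normal subgroup
  have hbasis : ∀ U : Set G, IsOpen U → (1 : G) ∈ U →
      ∃ N : I, (N.1 : Set G) ⊆ U := by
    intro U hU h1U
    obtain ⟨V, hV, h1V, hVU⟩ := compact_exists_isClopen_in_isOpen hU h1U
    obtain ⟨H, hH⟩ := IsTopologicalGroup.exist_openNormalSubgroup_sub_clopen_nhds_of_one hV h1V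
    exact ⟨⟨H.toSubgroup, H.isOpen, H.isNormal'⟩, fun g hg => hVU (hH hg)⟩
  -- key fact: `closure {x,y}` is topologically dense iff it joins with every
  -- open normal subgroup to the whole group
  have hdense : ∀ x y : G,
      (Subgroup.closure {x, y}).topologicalClosure = ⊤ ↔
      ∀ N : I, Subgroup.closure {x, y} ⊔ N.1 = ⊤ := by
    intro x y
    constructor
    · intro h N
      have hNopen : IsOpen ((Subgroup.closure {x, y} ⊔ N.1 : Subgroup G) : Set G) :=
        Subgroup.isOpen_mono le_sup_right N.2.1
      have hNclosed : IsClosed ((Subgroup.closure {x, y} ⊔ N.1 : Subgroup G) : Set G) :=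
        OpenSubgroup.isClosed ⟨_, hNopen⟩
      have := Subgroup.topologicalClosure_minimal (Subgroup.closure {x, y})
        (le_sup_left : Subgroup.closure {x, y} ≤ Subgroup.closure {x, y} ⊔ N.1) hNclosed
      rw [h] at this
      exact top_le_iff.1 this
    · intro h
      rw [eq_top_iff]
      intro g _
      -- show `g` is in the topological closure
      have : g ∈ _root_.closure ((Subgroup.closure {x, y} : Subgroup G) : Set G) := by
        rw [mem_closure_iff]
        intro o ho hgo
        have h1 : (1 : G) ∈ (fun h : G => g * h) ⁻¹' o := by simpa using hgo
        obtain ⟨N, hN⟩ := hbasis _ (ho.preimage (continuous_mul_left g)) h1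
        have hNnormal : N.1.Normal := N.2.2
        have hg : g ∈ ((Subgroup.closure {x, y} ⊔ N.1 : Subgroup G) : Set G) := by
          rw [h N]; trivial
        rw [Subgroup.mul_normal] at hg
        obtain ⟨a, ha, n, hn, rfl⟩ := hg
        refine ⟨a, ?_, ha⟩
        have hninv : n⁻¹ ∈ (fun h : G => (a * n) * h) ⁻¹' o :=
          hN (inv_mem hn : n⁻¹ ∈ (N.1 : Set G))
        simpa [mul_assoc] using hninv
      exact this
  -- rewrite the set as an intersection of clopen sets
  have hset : {x : G | ∃ y : G, (Subgroup.closure {x, y}).topologicalClosure = ⊤} =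
      ⋂ N : I, {x : G | ∃ y : G, Subgroup.closure {x, y} ⊔ N.1 = ⊤} := by
    ext x
    simp only [Set.mem_setOf_eq, Set.mem_iInter]
    constructor
    · rintro ⟨y, hy⟩ N
      exact ⟨y, ((hdense x y).1 hy) N⟩
    · intro h
      -- compactness argument: pick a common `y`
      set Y : I → Set G := fun N => {y : G | Subgroup.closure {x, y} ⊔ N.1 = ⊤} with hY
      have hYclosed : ∀ N : I, IsClosed (Y N) := by
        intro N
        rw [← isOpen_compl_iff]
        refine aux_open_of_saturated N.2.1 ?_
        intro y hy n hn
        simp only [Set.mem_compl_iff, hY, Set.mem_setOf_eq] at hy ⊢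
        rwa [aux_join_invR hn]
      have hYnonempty : ∀ N : I, (Y N).Nonempty := h
      have hYdirected : Directed (· ⊇ ·) Y := by
        intro N M
        have hinf : IsOpen ((N.1 ⊓ M.1 : Subgroup G) : Set G) := by
          have := N.2.1.inter M.2.1
          simpa using this
        haveI : N.1.Normal := N.2.2
        haveI : M.1.Normal := M.2.2
        refine ⟨⟨N.1 ⊓ M.1, hinf, inferInstance⟩, ?_, ?_⟩ <;>
        · intro y hy
          simp only [hY, Set.mem_setOf_eq] at hy ⊢
          rw [eq_top_iff, ← hy]
          exact sup_le_sup_left (by simp) _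
      have hYcompact : ∀ N : I, IsCompact (Y N) := fun N => (hYclosed N).isCompact
      obtain ⟨y, hy⟩ := IsCompact.nonempty_iInter_of_directed_nonempty_isCompact_isClosed
        Y hYdirected hYnonempty hYcompact hYclosed
      refine ⟨y, (hdense x y).2 ?_⟩
      intro N
      exact Set.mem_iInter.1 hy N
  rw [hset]
  refine isClosed_iInter ?_
  intro N
  rw [← isOpen_compl_iff]
  refine aux_open_of_saturated N.2.1 ?_
  rintro x hx n hn
  simp only [Set.mem_compl_iff, Set.mem_setOf_eq] at hx ⊢
  rintro ⟨y, hy⟩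
  exact hx ⟨y, by rwa [aux_join_invL hn] at hy⟩
end

section
/- Let G = ∏_{n∈ℕ} G_n be a product of finite 2-generated groups with the property that topological generation of G by a pair is equivalent to coordinatewise generation. Let x = (x_n) and y = (y_n) be non-isolated vertices of the generating graph of G. Then y lies in the same connected component of Δ(G) as x if and only if sup_n dist_{Δ(G_n)}(x_n, y_n) < ∞. -/
/-- The generating graph of a group `H`: distinct vertices `a`, `b` are adjacent iff
`⟨a, b⟩ = H`. Isolated vertices stay isolated, so distances between non-isolated vertices
agree with those in `Δ(H)`. -/
def genGraph (H : Type*) [Group H] : SimpleGraph H where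
  Adj a b := a ≠ b ∧ Subgroup.closure {a, b} = ⊤
  symm := ⟨by rintro a b ⟨h1, h2⟩; exact ⟨h1.symm, by rwa [Set.pair_comm]⟩⟩
  loopless := ⟨by rintro a ⟨h, -⟩; exact h rfl⟩

/-- The generating graph of a profinite group `H` (topological generation). -/
def topGenGraph (H : Type*) [Group H] [TopologicalSpace H] [IsTopologicalGroup H] : SimpleGraph H where
  Adj a b := a ≠ b ∧ (Subgroup.closure {a, b}).topologicalClosure = ⊤
  symm := ⟨by rintro a b ⟨h1, h2⟩; exact ⟨h1.symm, by rwa [Set.pair_comm]⟩⟩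
  loopless := ⟨by rintro a ⟨h, -⟩; exact h rfl⟩

/-- One step of the padding construction: if `x` has a generating partner `u` and
`dist x y ≤ m + 1` with `m ≥ 1`, then there is `z` with `⟨z, y⟩ = ⊤` and `dist x z ≤ m`. -/
lemma genGraph_step {H : Type*} [Group H] (x u y : H)
    (hu : Subgroup.closure {x, u} = ⊤) {m : ℕ} (hm : 1 ≤ m)
    (h : (genGraph H).edist x y ≤ ((m + 1 : ℕ) : ℕ∞)) :
    ∃ z : H, Subgroup.closure {z, y} = ⊤ ∧ (genGraph H).edist x z ≤ (m : ℕ∞) := by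
  by_cases hxy : x = y
  · subst hxy
    by_cases hux : u = x
    · subst hux
      exact ⟨u, hu, by simp [SimpleGraph.edist_self]⟩
    · refine ⟨u, by rwa [Set.pair_comm], ?_⟩
      have hadj : (genGraph H).Adj x u := ⟨fun h' => hux h'.symm, hu⟩
      calc (genGraph H).edist x u = 1 := SimpleGraph.edist_eq_one_iff_adj.mpr hadj
        _ ≤ (m : ℕ∞) := by exact_mod_cast hm
  · have hne : (genGraph H).edist x y ≠ ⊤ := by
      intro htop
      rw [htop] at h
      exact (ENat.coe_ne_top (m + 1)) (top_le_iff.mp h)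
    obtain ⟨p, hp⟩ := SimpleGraph.exists_walk_of_edist_ne_top hne
    have hlen : p.length ≤ m + 1 := by
      have : ((p.length : ℕ∞)) ≤ ((m + 1 : ℕ) : ℕ∞) := hp ▸ h
      exact_mod_cast this
    cases hpr : p.reverse with
    | nil => exact absurd rfl hxy
    | @cons _ v _ hadj q =>
      refine ⟨v, by rw [Set.pair_comm]; exact hadj.2, ?_⟩
      have hql : q.length + 1 = p.length := by
        have := SimpleGraph.Walk.length_reverse p
        rw [hpr] at this
        simpa [add_comm] using this
      have hqm : q.length ≤ m := by omega
      calc (genGraph H).edist x v = (genGraph H).edist v x := SimpleGraph.edist_comm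
        _ ≤ (q.length : ℕ∞) := SimpleGraph.edist_le q
        _ ≤ (m : ℕ∞) := by exact_mod_cast hqm

/-- Base case: if `dist x y ≤ 1` and `x` has a generating partner, there is a common
generating partner `z` of `x` and `y`. -/
lemma genGraph_base {H : Type*} [Group H] (x u y : H)
    (hu : Subgroup.closure {x, u} = ⊤)
    (h : (genGraph H).edist x y ≤ ((1 : ℕ) : ℕ∞)) :
    ∃ z : H, Subgroup.closure {x, z} = ⊤ ∧ Subgroup.closure {z, y} = ⊤ := by
  by_cases hxy : x = y
  · subst hxy
    by_cases hux : u = x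
    · subst hux; exact ⟨u, hu, hu⟩
    · exact ⟨u, hu, by rwa [Set.pair_comm]⟩
  · have hone : (genGraph H).edist x y = 1 := by
      refine le_antisymm (by exact_mod_cast h) ?_
      exact Order.one_le_iff_pos.mpr (SimpleGraph.edist_pos_of_ne hxy)
    have hadj : (genGraph H).Adj x y := SimpleGraph.edist_eq_one_iff_adj.mp hone
    have hgen : Subgroup.closure {x, y} = ⊤ := hadj.2
    refine ⟨x * y, ?_, ?_⟩
    · rw [eq_top_iff, ← hgen]
      refine (Subgroup.closure_le _).mpr ?_
      rw [Set.insert_subset_iff, Set.singleton_subset_iff]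
      refine ⟨Subgroup.subset_closure (Set.mem_insert _ _), ?_⟩
      have hx' : x ∈ Subgroup.closure {x, x * y} :=
        Subgroup.subset_closure (Set.mem_insert _ _)
      have hxy' : x * y ∈ Subgroup.closure {x, x * y} :=
        Subgroup.subset_closure (Set.mem_insert_of_mem _ rfl)
      simpa using mul_mem (inv_mem hx') hxy'
    · rw [eq_top_iff, ← hgen]
      refine (Subgroup.closure_le _).mpr ?_
      rw [Set.insert_subset_iff, Set.singleton_subset_iff]
      refine ⟨?_, Subgroup.subset_closure (Set.mem_insert_of_mem _ rfl)⟩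
      have hxy' : x * y ∈ Subgroup.closure {x * y, y} :=
        Subgroup.subset_closure (Set.mem_insert _ _)
      have hy' : y ∈ Subgroup.closure {x * y, y} :=
        Subgroup.subset_closure (Set.mem_insert_of_mem _ rfl)
      simpa using mul_mem hxy' (inv_mem hy')

/-- Let `G = ∏ n, G n` be a product of finite 2-generated groups in which topological
generation by a pair is coordinatewise generation. Two non-isolated vertices `x`, `y` of
the generating graph of `G` lie in the same connected component iff
`sup_n dist_{Δ(G n)}(x n, y n) < ∞`. -/
theorem stmt_11 {G : ℕ → Type*} [∀ n, Group (G n)] [∀ n, Finite (G n)]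
    [∀ n, TopologicalSpace (G n)] [∀ n, DiscreteTopology (G n)]
    [∀ n, IsTopologicalGroup (G n)]
    (h2 : ∀ n, ∃ a b : G n, Subgroup.closure {a, b} = ⊤)
    (hequiv : ∀ x y : (∀ n, G n),
      (Subgroup.closure {x, y}).topologicalClosure = ⊤ ↔
        ∀ n, Subgroup.closure {x n, y n} = ⊤)
    (x y : ∀ n, G n)
    (hx : ∃ u, (Subgroup.closure {x, u}).topologicalClosure = ⊤)
    (hy : ∃ u, (Subgroup.closure {y, u}).topologicalClosure = ⊤) :
    (topGenGraph (∀ n, G n)).Reachable x y ↔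
      ∃ m : ℕ, ∀ n, (genGraph (G n)).edist (x n) (y n) ≤ m := by
  -- one-step reachability from coordinatewise generation
  have hstep : ∀ v w : ∀ n, G n, (∀ n, Subgroup.closure {v n, w n} = ⊤) →
      (topGenGraph (∀ n, G n)).Reachable v w := by
    intro v w h
    by_cases hvw : v = w
    · exact hvw ▸ SimpleGraph.Reachable.refl v
    · exact SimpleGraph.Adj.reachable ⟨hvw, (hequiv v w).mpr h⟩
  constructor
  · -- forward: a walk of length m bounds every coordinate distance by m
    rintro ⟨p⟩
    refine ⟨p.length, ?_⟩
    clear hx hy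
    induction p with
    | nil => intro n; simp [SimpleGraph.edist_self]
    | @cons a c b h q ih =>
      intro n
      have hc : ∀ n, Subgroup.closure {a n, c n} = ⊤ := (hequiv a c).mp h.2
      have h1 : (genGraph (G n)).edist (a n) (c n) ≤ 1 := by
        by_cases hac : a n = c n
        · rw [hac]; simp [SimpleGraph.edist_self]
        · exact le_of_eq (SimpleGraph.edist_eq_one_iff_adj.mpr ⟨hac, hc n⟩)
      calc (genGraph (G n)).edist (a n) (b n)
          ≤ (genGraph (G n)).edist (a n) (c n) + (genGraph (G n)).edist (c n) (b n) :=
            SimpleGraph.edist_triangle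
        _ ≤ 1 + (q.length : ℕ∞) := add_le_add h1 (ih n)
        _ = (((SimpleGraph.Walk.cons h q).length : ℕ) : ℕ∞) := by
            rw [SimpleGraph.Walk.length_cons]; push_cast; ring
  · -- backward: bounded coordinatewise distances give reachability
    rintro ⟨m, hm⟩
    obtain ⟨u, hu⟩ := hx
    have hxu : ∀ n, Subgroup.closure {x n, u n} = ⊤ := (hequiv x u).mp hu
    have key : ∀ m : ℕ, ∀ y' : ∀ n, G n,
        (∀ n, (genGraph (G n)).edist (x n) (y' n) ≤ ((m + 1 : ℕ) : ℕ∞)) →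
        (topGenGraph (∀ n, G n)).Reachable x y' := by
      intro m
      induction m with
      | zero =>
        intro y' hb
        choose z hz1 hz2 using fun n => genGraph_base (x n) (u n) (y' n) (hxu n) (hb n)
        exact (hstep x z hz1).trans (hstep z y' hz2)
      | succ m ih =>
        intro y' hb
        choose z hz1 hz2 using fun n =>
          genGraph_step (x n) (u n) (y' n) (hxu n) (Nat.le_add_left 1 m) (hb n)
        exact (ih z hz2).trans (hstep z y' hz1)
    match m, hm with
    | 0, hm =>
      have hxy : x = y := funext fun n => by
        have := hm n
        rw [Nat.cast_zero] at this
        exact SimpleGraph.edist_eq_zero_iff.mp (le_antisymm this (zero_le))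
      exact hxy ▸ SimpleGraph.Reachable.refl x
    | (m + 1), hm => exact key m y hm
end

section
/- Let G be a finite group, N an abelian minimal normal subgroup of G not contained in the Frattini subgroup, with q = |End_G(N)| and N of dimension r over End_G(N). Let g be a non-isolated vertex of Γ(G) and y with ⟨g, y⟩ = G. Then the number of elements x ∈ yN with ⟨g, x⟩ = G is at least |N|(q−1)/q = q^(r−1)(q−1); in particular it is at least 2 unless q = 2 and r = 1. -/
open scoped Pointwise

namespace Stmt13Aux

variable {G : Type*} [Group G] {N : Subgroup G} [N.Normal]

/-- 1-cocycle condition for maps `G → N`. -/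
def IsCoc (ε : G → N) : Prop :=
  ∀ x z : G, ε (x * z) = MulAut.conjNormal z⁻¹ (ε x) * ε z

theorem mul4 (hab : ∀ a b : N, a * b = b * a) (a b c d : N) :
    a * b * (c * d) = a * c * (b * d) := by
  rw [mul_assoc, ← mul_assoc b, hab b c, mul_assoc, ← mul_assoc]

theorem IsCoc.mul (hab : ∀ a b : N, a * b = b * a) {ε ε' : G → N}
    (h : IsCoc ε) (h' : IsCoc ε') : IsCoc fun x => ε x * ε' x := by
  intro x z
  simp only []
  rw [h, h', map_mul, mul4 hab]

theorem IsCoc.inv (hab : ∀ a b : N, a * b = b * a) {ε : G → N}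
    (h : IsCoc ε) : IsCoc fun x => (ε x)⁻¹ := by
  intro x z
  simp only []
  rw [h, mul_inv_rev, hab]; simp

theorem IsCoc.one : IsCoc (fun _ : G => (1 : N)) := by
  intro x z; simp

theorem IsCoc.comp {ε : G → N} (h : IsCoc ε) (f : N →* N)
    (hf : ∀ (u : G) (n : N), f (MulAut.conjNormal u n) = MulAut.conjNormal u (f n)) :
    IsCoc fun x => f (ε x) := by
  intro x z
  simp only []
  rw [h, map_mul, hf]

theorem IsCoc.apply_one {ε : G → N} (h : IsCoc ε) : ε 1 = 1 := by
  have h1 := h 1 1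
  simp only [one_mul, inv_one, map_one, MulAut.one_apply] at h1
  exact (right_eq_mul.mp h1)

end Stmt13Aux

namespace Stmt13Aux

section
variable {G : Type*} [Group G] {N : Subgroup G} [N.Normal]

set_option linter.unusedSectionVars false

/-- From a complement `M` of `N` we get a 1-cocycle `δ` with
`δ x = n⁻¹` whenever `x * n ∈ M`. -/
theorem exists_delta (hab : ∀ a b : N, a * b = b * a) (M : Subgroup G)
    (hsup : M ⊔ N = ⊤) (hinf : M ⊓ N = ⊥) :
    ∃ δ : G → N, IsCoc δ ∧ ∀ (x : G) (n : N), x * ↑n ∈ M → δ x = n⁻¹ := by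
  have hex : ∀ x : G, ∃ n : N, x * ↑n ∈ M := by
    intro x
    have hx : x ∈ (↑(M ⊔ N) : Set G) := by rw [hsup]; trivial
    rw [Subgroup.mul_normal] at hx
    obtain ⟨m, hm, b, hb, rfl⟩ := hx
    refine ⟨(⟨b, hb⟩ : N)⁻¹, ?_⟩
    simpa using hm
  have huniq : ∀ (x : G) (n n' : N), x * ↑n ∈ M → x * ↑n' ∈ M → n = n' := by
    intro x n n' hn hn'
    have hmem : ((↑(n⁻¹ * n') : G)) ∈ M ⊓ N := by
      constructor
      · have := mul_mem (inv_mem hn) hn'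
        simpa [mul_assoc] using this
      · exact (n⁻¹ * n').2
    rw [hinf] at hmem
    have : (n⁻¹ * n' : N) = 1 := by
      ext; simpa using hmem
    exact (inv_mul_eq_one.mp this)
  choose δ0 hδ0 using hex
  refine ⟨fun x => (δ0 x)⁻¹, ?_, ?_⟩
  · -- cocycle
    intro x z
    simp only []
    have hchar : ∀ (x : G) (n : N), x * ↑n ∈ M → (δ0 x)⁻¹ = n⁻¹ := by
      intro x n hn
      rw [huniq x (δ0 x) n (hδ0 x) hn]
    have main : (δ0 (x*z))⁻¹ = (((MulAut.conjNormal z⁻¹ ((δ0 x)⁻¹)) * (δ0 z)⁻¹)⁻¹)⁻¹ := by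
      refine hchar (x * z) ((MulAut.conjNormal z⁻¹ ((δ0 x)⁻¹)) * (δ0 z)⁻¹)⁻¹ ?_
      -- goal : (x*z) * ↑(...)⁻¹ ∈ M
      have hA := hδ0 x
      have hB := hδ0 z
      have key : (x * z) * (↑((MulAut.conjNormal z⁻¹ ((δ0 x)⁻¹)) * (δ0 z)⁻¹)⁻¹ : G)
          = (x * ↑(δ0 x)) * (z * ↑(δ0 z)) := by
        have hc : (↑(δ0 z) : G) * (z⁻¹ * ↑(δ0 x) * z⁻¹⁻¹) = z⁻¹ * ↑(δ0 x) * z⁻¹⁻¹ * ↑(δ0 z) := by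
          have h1 := hab (MulAut.conjNormal z⁻¹ (δ0 x)) (δ0 z)
          have h2 := congrArg (fun t : N => (t : G)) h1
          push_cast [MulAut.conjNormal_apply] at h2
          exact h2.symm
        push_cast [MulAut.conjNormal_apply]
        generalize (↑(δ0 x) : G) = a at hc ⊢
        generalize (↑(δ0 z) : G) = b at hc ⊢
        have expand : x * z * (z⁻¹ * a⁻¹ * z⁻¹⁻¹ * b⁻¹)⁻¹
            = x * z * (b * (z⁻¹ * a * z⁻¹⁻¹)) := by group
        rw [expand, hc]
        group
      rw [key]
      exact mul_mem hA hB
    simpa using main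
  · intro x n hn
    simp only []
    rw [huniq x (δ0 x) n (hδ0 x) hn]

/-- Schur: a nonzero `G`-equivariant endomorphism of the minimal normal subgroup `N`
is injective. -/
theorem schur (hmin : ∀ K : Subgroup G, K.Normal → K ≤ N → K ≠ ⊥ → K = N)
    (f : N →* N)
    (hf : ∀ (u : G) (n : N), f (MulAut.conjNormal u n) = MulAut.conjNormal u (f n))
    (hne : ∃ n : N, f n ≠ 1) : Function.Injective f := by
  rw [← MonoidHom.ker_eq_bot_iff]
  set K := Subgroup.map N.subtype f.ker with hK
  have hKN : K ≤ N := by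
    rintro x ⟨n, _, rfl⟩
    exact n.2
  have hKnorm : K.Normal := by
    constructor
    intro k hk u
    rw [hK, Subgroup.mem_map] at hk
    obtain ⟨n, hn, hn2⟩ := hk
    rw [hK, Subgroup.mem_map]
    refine ⟨MulAut.conjNormal u n, ?_, ?_⟩
    · have hfn : f n = 1 := hn
      have : f (MulAut.conjNormal u n) = 1 := by rw [hf, hfn, map_one]
      exact this
    · simp only [Subgroup.coe_subtype, MulAut.conjNormal_apply, ← hn2]
  have hKne : K ≠ N := by
    intro h
    obtain ⟨n, hn⟩ := hne
    have hnK : (↑n : G) ∈ K := by rw [h]; exact n.2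
    rw [hK, Subgroup.mem_map] at hnK
    obtain ⟨m, hm, hmn⟩ := hnK
    have : m = n := Subtype.ext hmn
    rw [this] at hm
    exact hn hm
  have hKbot : K = ⊥ := by
    by_contra h
    exact hKne (hmin K hKnorm hKN h)
  ext n
  simp only [Subgroup.mem_bot]
  constructor
  · intro hn
    have : (↑n : G) ∈ K := ⟨n, hn, rfl⟩
    rw [hKbot, Subgroup.mem_bot] at this
    exact Subtype.ext this
  · rintro rfl; exact map_one f

end

end Stmt13Aux

open Stmt13Aux

/-- Let `N` be an abelian minimal normal subgroup of a finite 2-generated group `G`, not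
contained in the Frattini subgroup, let `q` be the cardinality of the ring `End_G(N)` of
`G`-equivariant endomorphisms of `N` and `r` the dimension of `N` over `End_G(N)` (so
`|N| = q ^ r`).  If `g` is a non-isolated vertex of the generating graph and `⟨g, y⟩ = G`,
then the number of `x ∈ yN` with `⟨g, x⟩ = G` is at least `|N|(q-1)/q = q^(r-1)(q-1)`;
in particular it is at least `2` unless `q = 2` and `r = 1`. -/
theorem stmt_13 {G : Type*} [Group G] [Finite G]
    (h2 : ∃ a b : G, Subgroup.closure {a, b} = ⊤)
    (N : Subgroup G) [N.Normal] (hbot : N ≠ ⊥)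
    (hmin : ∀ K : Subgroup G, K.Normal → K ≤ N → K ≠ ⊥ → K = N)
    (hab : ∀ a ∈ N, ∀ b ∈ N, a * b = b * a)
    (hfr : ¬ N ≤ frattini G)
    (q r : ℕ)
    (hq : q = Nat.card {f : N →* N //
      ∀ (g : G) (n : N), f (MulAut.conjNormal g n) = MulAut.conjNormal g (f n)})
    (hr : 0 < r) (hqr : Nat.card N = q ^ r)
    (g y : G) (hy : Subgroup.closure {g, y} = ⊤) :
    q ^ (r - 1) * (q - 1) ≤
        Set.ncard {x : G | Subgroup.closure {g, x} = ⊤ ∧ x ∈ y • (N : Set G)} ∧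
      (¬ (q = 2 ∧ r = 1) →
        2 ≤ Set.ncard {x : G | Subgroup.closure {g, x} = ⊤ ∧ x ∈ y • (N : Set G)}) := by
  classical
  have habN : ∀ a b : N, a * b = b * a := fun a b => Subtype.ext (hab a a.2 b b.2)
  letI : CommGroup N := { (inferInstance : Group N) with mul_comm := habN }
  have hfinHom : Finite ((N : Subgroup G) →* N) :=
    Finite.of_injective _ DFunLike.coe_injective
  -- N is nontrivial
  have hNnt : ∃ n : N, n ≠ 1 := by
    rcases Subgroup.bot_or_exists_ne_one N with h | ⟨x, hx, hx1⟩
    · exact absurd h hbot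
    · exact ⟨⟨x, hx⟩, fun hc => hx1 (by simpa using congrArg Subtype.val hc)⟩
  -- q ≥ 2
  have hq2 : 2 ≤ q := by
    rw [hq]
    have hnt : Nontrivial {f : N →* N //
        ∀ (g : G) (n : N), f (MulAut.conjNormal g n) = MulAut.conjNormal g (f n)} := by
      refine ⟨⟨⟨MonoidHom.id N, fun u n => rfl⟩, ⟨1, fun u n => by simp⟩, ?_⟩⟩
      intro hcon
      obtain ⟨n, hn⟩ := hNnt
      have := congrArg (fun f : {f : N →* N //
        ∀ (g : G) (n : N), f (MulAut.conjNormal g n) = MulAut.conjNormal g (f n)} => f.1 n) hcon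
      simp only [MonoidHom.id_apply, MonoidHom.one_apply] at this
      exact hn this
    exact Finite.one_lt_card_iff_nontrivial.mpr hnt
  have hpow : q ^ (r - 1) * q = q ^ r := by
    rw [← pow_succ]
    congr 1
    omega
  set T : Set G := {x : G | Subgroup.closure {g, x} = ⊤ ∧ x ∈ y • (N : Set G)} with hT
  set Sg : Set N := {n : N | Subgroup.closure {g, y * ↑n} = ⊤} with hSg
  have hTeq : T = (fun n : N => y * ↑n) '' Sg := by
    ext x
    simp only [hT, Set.mem_setOf_eq, Set.mem_image, hSg]
    constructor
    · rintro ⟨hcl, hx⟩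
      rw [Set.mem_smul_set] at hx
      obtain ⟨b, hb, rfl⟩ := hx
      exact ⟨⟨b, hb⟩, by simpa [smul_eq_mul] using hcl, by simp [smul_eq_mul]⟩
    · rintro ⟨n, hn, rfl⟩
      exact ⟨hn, Set.mem_smul_set.mpr ⟨↑n, n.2, by simp [smul_eq_mul]⟩⟩
  have hinj : Function.Injective (fun n : N => y * (↑n : G)) :=
    fun a b h => Subtype.ext (mul_left_cancel h)
  have hTcard : T.ncard = Sg.ncard := by
    rw [hTeq]; exact Set.ncard_image_of_injective _ hinj
  have hcompl_card : Sg.ncard + Sgᶜ.ncard = q ^ r := by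
    rw [← hqr]
    exact Set.ncard_add_ncard_compl Sg
  -- ========== the key bound ==========
  have hbad : Sgᶜ.ncard ≤ q ^ (r - 1) := by
    rcases Set.eq_empty_or_nonempty Sgᶜ with he | hne
    · rw [he, Set.ncard_empty]; exact Nat.zero_le _
    obtain ⟨n0, hn0⟩ := hne
    -- every bad coset gives a complement
    have hcompl : ∀ n : N, n ∈ Sgᶜ →
        Subgroup.closure {g, y * ↑n} ⊔ N = ⊤ ∧ Subgroup.closure {g, y * ↑n} ⊓ N = ⊥ := by
      intro n hn
      have hnn : Subgroup.closure {g, y * (↑n : G)} ≠ ⊤ := by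
        simpa [hSg] using hn
      have hgH : g ∈ Subgroup.closure {g, y * (↑n : G)} :=
        Subgroup.subset_closure (Set.mem_insert _ _)
      have hynH : y * ↑n ∈ Subgroup.closure {g, y * (↑n : G)} :=
        Subgroup.subset_closure (Set.mem_insert_of_mem _ rfl)
      have hsup : Subgroup.closure {g, y * (↑n : G)} ⊔ N = ⊤ := by
        rw [← top_le_iff, ← hy, Subgroup.closure_le]
        intro w hw
        rcases hw with rfl | hw
        · exact Subgroup.mem_sup_left hgH
      -- w = y case
        · rw [Set.mem_singleton_iff] at hw
          subst hw
          have hmm := mul_mem (Subgroup.mem_sup_left hynH :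
              w * ↑n ∈ Subgroup.closure {g, w * (↑n : G)} ⊔ N)
            (Subgroup.mem_sup_right (N.inv_mem n.2) :
              (↑n : G)⁻¹ ∈ Subgroup.closure {g, w * (↑n : G)} ⊔ N)
          simpa using hmm
      refine ⟨hsup, ?_⟩
      have hKnorm : (Subgroup.closure {g, y * (↑n : G)} ⊓ N).Normal := by
        constructor
        intro k hk u
        have hk1 : k ∈ Subgroup.closure {g, y * (↑n : G)} := hk.1
        have hk2 : k ∈ N := hk.2
        have hu : u ∈ (↑(Subgroup.closure {g, y * (↑n : G)} ⊔ N) : Set G) := by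
          rw [hsup]; trivial
        rw [Subgroup.mul_normal] at hu
        obtain ⟨h0, hh0, b, hb, rfl⟩ := hu
        have hcm : b * k * b⁻¹ = k := by
          have := hab b hb k hk2
          rw [this]; group
        have hrw : (h0 * b) * k * (h0 * b)⁻¹ = h0 * (b * k * b⁻¹) * h0⁻¹ := by group
        rw [hrw, hcm]
        exact Subgroup.mem_inf.mpr ⟨mul_mem (mul_mem hh0 hk1)
            ((Subgroup.closure {g, y * (↑n : G)}).inv_mem hh0),
          Subgroup.Normal.conj_mem ‹N.Normal› k hk2 h0⟩
      by_contra hKb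
      have hKN' := hmin _ hKnorm inf_le_right hKb
      have hNle : N ≤ Subgroup.closure {g, y * (↑n : G)} := by
        intro x hx
        have hx2 : x ∈ Subgroup.closure {g, y * (↑n : G)} ⊓ N := by
          rw [hKN']; exact hx
        exact hx2.1
      have : Subgroup.closure {g, y * (↑n : G)} = ⊤ := by
        rw [← hsup, sup_eq_left.mpr hNle]
      exact hnn this
    -- cocycles attached to bad cosets
    choose δ hδcoc hδchar using fun (n : N) (hn : n ∈ Sgᶜ) =>
      exists_delta habN (Subgroup.closure {g, y * (↑n : G)}) (hcompl n hn).1 (hcompl n hn).2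
    have hδg : ∀ n hn, δ n hn g = 1 := by
      intro n hn
      have hg1 : g * ((1 : N) : G) ∈ Subgroup.closure {g, y * (↑n : G)} := by
        simpa using Subgroup.subset_closure (Set.mem_insert g _)
      simpa using hδchar n hn g 1 hg1
    have hδy : ∀ n hn, δ n hn y = n⁻¹ := by
      intro n hn
      exact hδchar n hn y n (Subgroup.subset_closure (Set.mem_insert_of_mem _ rfl))
    have hδN : ∀ n hn (m : N), δ n hn ↑m = m := by
      intro n hn m
      have hmem : (↑m : G) * ↑(m⁻¹) ∈ Subgroup.closure {g, y * (↑n : G)} := by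
        have : (↑m : G) * ↑(m⁻¹) = 1 := by push_cast; group
        rw [this]; exact one_mem _
      simpa using hδchar n hn ↑m m⁻¹ hmem
    set W : Set N :=
      {w : N | ∃ ε : G → N, IsCoc ε ∧ (∀ m : N, ε ↑m = 1) ∧ ε g = 1 ∧ ε y = w} with hW
    have hmapW : ∀ n (hn : n ∈ Sgᶜ), n⁻¹ * n0 ∈ W := by
      intro n hn
      refine ⟨fun x => δ n hn x * (δ n0 hn0 x)⁻¹,
        IsCoc.mul habN (hδcoc n hn) (IsCoc.inv habN (hδcoc n0 hn0)), ?_, ?_, ?_⟩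
      · intro m; simp only []; rw [hδN n hn m, hδN n0 hn0 m]; group
      · simp only []; rw [hδg n hn, hδg n0 hn0]; group
      · simp only []; rw [hδy n hn, hδy n0 hn0]; group
    have hn0W : n0 ∉ W := by
      rintro ⟨ε, hcoc, hN1, hg1, hy1⟩
      have hδ0coc := hδcoc n0 hn0
      have hsum : IsCoc fun x => ε x * δ n0 hn0 x := IsCoc.mul habN hcoc hδ0coc
      set M1 : Subgroup G :=
        { carrier := {x : G | ε x * δ n0 hn0 x = 1}
          one_mem' := by
            simp only [Set.mem_setOf_eq]
            rw [hcoc.apply_one, hδ0coc.apply_one, mul_one]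
          mul_mem' := by
            intro a b ha hb
            simp only [Set.mem_setOf_eq] at ha hb ⊢
            have hs := hsum a b
            simp only [] at hs
            rw [hs, ha, hb]
            simp only [map_one, one_mul, mul_one]
          inv_mem' := by
            intro a ha
            simp only [Set.mem_setOf_eq] at ha ⊢
            have h1 := hsum a a⁻¹
            simp only [mul_inv_cancel] at h1
            rw [hcoc.apply_one, hδ0coc.apply_one, ha] at h1
            simp only [map_one, one_mul, mul_one] at h1
            exact h1.symm } with hM1
      have hM1mem : ∀ x : G, x ∈ M1 ↔ ε x * δ n0 hn0 x = 1 := fun x => Iff.rfl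
      have htop : (⊤ : Subgroup G) ≤ M1 := by
        rw [← hy, Subgroup.closure_le]
        intro w hw
        rcases hw with rfl | hw
        · rw [SetLike.mem_coe, hM1mem, hg1, hδg n0 hn0, mul_one]
        · rw [Set.mem_singleton_iff] at hw
          subst hw
          rw [SetLike.mem_coe, hM1mem, hy1, hδy n0 hn0]
          group
      obtain ⟨m, hm⟩ := hNnt
      have hmM : (↑m : G) ∈ M1 := htop trivial
      rw [hM1mem, hN1 m, hδN n0 hn0 m, one_mul] at hmM
      exact hm hmM
    -- W is a subgroup stable under equivariant endomorphisms
    have Wone : (1 : N) ∈ W := ⟨fun _ => 1, IsCoc.one, fun m => rfl, rfl, rfl⟩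
    have Wmul : ∀ a ∈ W, ∀ b ∈ W, a * b ∈ W := by
      rintro a ⟨ε, hc, hN1, hg1, hy1⟩ b ⟨ε', hc', hN1', hg1', hy1'⟩
      refine ⟨fun x => ε x * ε' x, IsCoc.mul habN hc hc', ?_, ?_, ?_⟩
      · intro m; simp only []; rw [hN1 m, hN1' m, mul_one]
      · simp only []; rw [hg1, hg1', mul_one]
      · simp only []; rw [hy1, hy1']
    have Winv : ∀ a ∈ W, a⁻¹ ∈ W := by
      rintro a ⟨ε, hc, hN1, hg1, hy1⟩
      refine ⟨fun x => (ε x)⁻¹, IsCoc.inv habN hc, ?_, ?_, ?_⟩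
      · intro m; simp only []; rw [hN1 m]; group
      · simp only []; rw [hg1]; group
      · simp only []; rw [hy1]
    have Wstab : ∀ (f : N →* N),
        (∀ (u : G) (m : N), f (MulAut.conjNormal u m) = MulAut.conjNormal u (f m)) →
        ∀ a ∈ W, f a ∈ W := by
      rintro f hf a ⟨ε, hc, hN1, hg1, hy1⟩
      refine ⟨fun x => f (ε x), hc.comp f hf, ?_, ?_, ?_⟩
      · intro m; simp only []; rw [hN1 m, map_one]
      · simp only []; rw [hg1, map_one]
      · simp only []; rw [hy1]
    set W' : Subgroup N :=
      { carrier := W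
        one_mem' := Wone
        mul_mem' := fun {a b} ha hb => Wmul a ha b hb
        inv_mem' := fun {a} ha => Winv a ha } with hW'
    -- bad set injects into W
    have hinj2 : Sgᶜ.ncard ≤ W.ncard := by
      apply Set.ncard_le_ncard_of_injOn (fun n => n⁻¹ * n0) (fun n hn => hmapW n hn)
      · intro a _ b _ hab2
        simp only [] at hab2
        have := mul_right_cancel hab2
        exact inv_injective this
    -- the endomorphism ring injects into N ⧸ W'
    have hEinj : Function.Injective (fun f : {f : N →* N //
        ∀ (g : G) (n : N), f (MulAut.conjNormal g n) = MulAut.conjNormal g (f n)} =>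
        (QuotientGroup.mk (f.1 n0) : N ⧸ W')) := by
      intro f f' hff
      by_contra hne'
      simp only [] at hff
      rw [QuotientGroup.eq] at hff
      -- hff : (f.1 n0)⁻¹ * f'.1 n0 ∈ W'
      set h : (N : Subgroup G) →* N :=
        MonoidHom.mk' (fun m => (f.1 m)⁻¹ * f'.1 m) (by
          intro a b
          simp only [map_mul, mul_inv_rev]
          simp [mul_assoc, mul_comm, mul_left_comm]) with hh
      have happ : ∀ m : N, h m = (f.1 m)⁻¹ * f'.1 m := fun m => rfl
      have hequiv : ∀ (u : G) (m : N),
          h (MulAut.conjNormal u m) = MulAut.conjNormal u (h m) := by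
        intro u m
        rw [happ, happ, f.2 u m, f'.2 u m, map_mul, map_inv]
      have hne2 : ∃ m : N, h m ≠ 1 := by
        by_contra hcon
        push_neg at hcon
        apply hne'
        apply Subtype.ext
        ext m
        have hm := hcon m
        rw [happ] at hm
        have : f'.1 m = f.1 m := by
          have := inv_mul_eq_one.mp hm
          exact this.symm
        rw [this]
      have hinj3 : Function.Injective h := schur hmin h hequiv hne2
      have hmaps : ∀ w ∈ W, h w ∈ W := by
        intro w hw
        have h1 : f.1 w ∈ W := Wstab f.1 f.2 w hw
        have h2 : f'.1 w ∈ W := Wstab f'.1 f'.2 w hw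
        have := Wmul _ (Winv _ h1) _ h2
        rw [happ]
        exact this
      have himg : h '' W = W := by
        apply Set.eq_of_subset_of_ncard_le
        · rintro _ ⟨w, hw, rfl⟩; exact hmaps w hw
        · rw [Set.ncard_image_of_injective _ hinj3]
        · exact Set.toFinite W
      have hn0in : n0 ∈ W := by
        have hmem : h n0 ∈ h '' W := by rw [himg]; exact hff
        obtain ⟨w, hw2, hww⟩ := hmem
        have : w = n0 := hinj3 hww
        rwa [this] at hw2
      exact hn0W hn0in
    have hcard1 : q ≤ Nat.card ((N : Subgroup G) ⧸ W') := by
      rw [hq]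
      exact Nat.card_le_card_of_injective _ hEinj
    have hcard2 : Nat.card N = Nat.card ((N : Subgroup G) ⧸ W') * Nat.card W' :=
      Subgroup.card_eq_card_quotient_mul_card_subgroup W'
    have hWW' : W.ncard = Nat.card W' := (Nat.card_coe_set_eq W).symm
    have hle : q * Nat.card W' ≤ q ^ (r - 1) * q := by
      calc q * Nat.card W' ≤ Nat.card ((N : Subgroup G) ⧸ W') * Nat.card W' :=
            Nat.mul_le_mul_right _ hcard1
        _ = q ^ r := by rw [← hcard2, hqr]
        _ = q ^ (r - 1) * q := hpow.symm
    have hWle : W.ncard ≤ q ^ (r - 1) := by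
      rw [hWW']
      have hq0 : 0 < q := by omega
      have : q * Nat.card W' ≤ q * q ^ (r - 1) := by
        rw [mul_comm (q ^ (r - 1)) q] at hle
        exact hle
      exact Nat.le_of_mul_le_mul_left this hq0
    exact hinj2.trans hWle
  -- ========== arithmetic conclusion ==========
  have e1 : q ^ (r - 1) * (q - 1) + q ^ (r - 1) = q ^ r := by
    have hq1 : q - 1 + 1 = q := by omega
    calc q ^ (r - 1) * (q - 1) + q ^ (r - 1) = q ^ (r - 1) * ((q - 1) + 1) := by ring
      _ = q ^ (r - 1) * q := by rw [hq1]
      _ = q ^ r := hpow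
  have main1 : q ^ (r - 1) * (q - 1) ≤ T.ncard := by
    have h2 : q ^ (r - 1) * (q - 1) + q ^ (r - 1) ≤ Sg.ncard + q ^ (r - 1) := by
      rw [e1, ← hcompl_card]
      exact Nat.add_le_add_left hbad _
    rw [hTcard]
    exact Nat.le_of_add_le_add_right h2
  refine ⟨main1, ?_⟩
  intro hne
  have main2 : 2 ≤ q ^ (r - 1) * (q - 1) := by
    rcases Nat.lt_or_ge q 3 with hq3 | hq3
    · have hq2' : q = 2 := by omega
      have hr2 : 2 ≤ r := by
        rcases Nat.lt_or_ge r 2 with h | h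
        · exact absurd ⟨hq2', by omega⟩ hne
        · exact h
      subst hq2'
      have h21 : 2 ≤ 2 ^ (r - 1) := by
        calc 2 = 2 ^ 1 := rfl
          _ ≤ 2 ^ (r - 1) := Nat.pow_le_pow_right (by norm_num) (by omega)
      simpa using h21
    · have h1 : 1 ≤ q ^ (r - 1) := Nat.one_le_pow _ _ (by omega)
      have h2 : 2 ≤ q - 1 := by omega
      calc 2 = 1 * 2 := by norm_num
        _ ≤ q ^ (r - 1) * (q - 1) := Nat.mul_le_mul h1 h2
  exact main2.trans main1
end

section
/- Let G be the semidirect product (∏_{p odd prime} C_p³) ⋊ C₂², where the three involutions h₁, h₂, h₃ of C₂² act on each C_p³ by inverting all coordinates except the j-th (h_j fixes only the j-th coordinate). Then the Haar measure of the set of non-isolated vertices of the generating graph of G is zero. -/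
/-! The example of Lucchini: `G = (∏_{p odd prime} C_p³) ⋊ C₂²`, where the three
involutions `h₁, h₂, h₃` of `C₂²` act on each `C_p³` by inverting all coordinates except
one (with `h_j` fixing exactly the `j`-th coordinate).  The set of non-isolated vertices
of the generating graph of `G` has normalized Haar measure `0`. -/

/-- The type of odd primes. -/
def OddPrime : Type := {p : ℕ // p.Prime ∧ p ≠ 2}

/-- `N = ∏_{p odd} C_p³`. -/
abbrev NPart : Type := ∀ p : OddPrime, Fin 3 → ZMod p.1

instance (n : ℕ) : TopologicalSpace (ZMod n) := ⊥
instance (n : ℕ) : DiscreteTopology (ZMod n) := ⟨rfl⟩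

/-- `H = C₂²`, whose nontrivial elements are `h₁ = (1,0)`, `h₂ = (0,1)`, `h₃ = (1,1)`. -/
abbrev HPart : Type := ZMod 2 × ZMod 2

/-- `sgn i h = 1` exactly when `h` inverts the `i`-th coordinate: `h₁` fixes the `0`-th
coordinate and inverts the others, `h₂` fixes the `1`-st, `h₃ = h₁h₂` fixes the `2`-nd. -/
def sgn (i : Fin 3) (h : HPart) : ZMod 2 := ![h.2, h.1, h.1 + h.2] i

/-- The sign `±1 ∈ ℤ` attached to an element of `ZMod 2`. -/
def sgnUnit (a : ZMod 2) : ℤ := if a = 0 then 1 else -1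

lemma sgnUnit_mul_self : ∀ a : ZMod 2, sgnUnit a * sgnUnit a = 1 := by decide
lemma sgnUnit_add : ∀ a b : ZMod 2, sgnUnit (a + b) = sgnUnit a * sgnUnit b := by decide
lemma sgn_add (i : Fin 3) (h h' : HPart) : sgn i (h + h') = sgn i h + sgn i h' := by
  fin_cases i <;> simp [sgn] <;> ring

/-- The action of `h ∈ H` on `N`: the `i`-th coordinate of each `C_p³` is multiplied by
the sign `sgnUnit (sgn i h)`. -/
def actFun (h : HPart) (n : NPart) : NPart := fun p i => sgnUnit (sgn i h) • n p i

lemma actFun_actFun (h : HPart) (n : NPart) : actFun h (actFun h n) = n := by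
  funext p i
  simp only [actFun, smul_smul, sgnUnit_mul_self, one_smul]

/-- The action of `h ∈ H` on `N` as an automorphism of `N`. -/
def actAut (h : HPart) : AddAut NPart where
  toFun := actFun h
  invFun := actFun h
  left_inv := actFun_actFun h
  right_inv := actFun_actFun h
  map_add' n m := by funext p i; simp [actFun, smul_add]

lemma actAut_comp (h h' : HPart) (n : NPart) :
    actAut (h + h') n = actAut h (actAut h' n) := by
  funext p i
  simp only [actAut, AddEquiv.coe_mk, Equiv.coe_fn_mk, actFun, sgn_add, sgnUnit_add,
    mul_smul]

/-- The action homomorphism `φ : H →* Aut(N)` (written multiplicatively). -/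
def actHom : Multiplicative HPart →* MulAut (Multiplicative NPart) :=
  MonoidHom.mk' (fun h => AddEquiv.toMultiplicative (actAut h.toAdd)) (by
    intro a b
    refine MulEquiv.ext fun n => ?_
    show Multiplicative.ofAdd (actAut (a.toAdd + b.toAdd) n.toAdd) = _
    rw [actAut_comp]
    rfl)

/-- The profinite group `G = (∏_{p odd} C_p³) ⋊ C₂²` of the example. -/
abbrev ExG : Type := SemidirectProduct (Multiplicative NPart) (Multiplicative HPart) actHom

instance : TopologicalSpace ExG :=
  TopologicalSpace.induced (fun g : ExG => (g.left, g.right)) inferInstance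

lemma continuous_exgPair : Continuous (fun g : ExG => (g.left, g.right)) := by
  rw [continuous_iff_le_induced]
  exact le_rfl

lemma continuous_exgLeft : Continuous (fun g : ExG => g.left) :=
  continuous_fst.comp continuous_exgPair

lemma continuous_exgRight : Continuous (fun g : ExG => g.right) :=
  continuous_snd.comp continuous_exgPair

lemma continuous_act : Continuous
    (fun q : Multiplicative HPart × Multiplicative NPart => (actHom q.1 q.2 :
      Multiplicative NPart)) := by
  apply continuous_pi
  intro p
  apply continuous_pi
  intro i
  have : (fun q : Multiplicative HPart × Multiplicative NPart =>
      ((actHom q.1 q.2 : Multiplicative NPart) : NPart) p i) =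
      (fun d : Multiplicative HPart × ZMod p.1 => sgnUnit (sgn i d.1.toAdd) • d.2) ∘
        (fun q : Multiplicative HPart × Multiplicative NPart => (q.1, (q.2 : NPart) p i)) :=
    rfl
  rw [this]
  exact continuous_of_discreteTopology.comp
    (continuous_fst.prodMk ((continuous_apply i).comp
      ((continuous_apply p).comp continuous_snd)))

/-- `G` is a topological group. -/
instance : IsTopologicalGroup ExG where
  continuous_mul := by
    apply continuous_induced_rng.2
    show Continuous (fun pq : ExG × ExG =>
      (pq.1.left * actHom pq.1.right pq.2.left, pq.1.right * pq.2.right))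
    exact ((continuous_exgLeft.comp continuous_fst).mul
        (continuous_act.comp ((continuous_exgRight.comp continuous_fst).prodMk
          (continuous_exgLeft.comp continuous_snd)))).prodMk
      ((continuous_exgRight.comp continuous_fst).mul
        (continuous_exgRight.comp continuous_snd))
  continuous_inv := by
    apply continuous_induced_rng.2
    show Continuous (fun g : ExG =>
      ((actHom g.right⁻¹ g.left⁻¹ : Multiplicative NPart), g.right⁻¹))
    exact (continuous_act.comp ((continuous_exgRight.inv).prodMk
      (continuous_exgLeft.inv))).prodMk continuous_exgRight.inv

instance : MeasurableSpace ExG := borel ExG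
instance : BorelSpace ExG := ⟨rfl⟩


open SemidirectProduct DihedralGroup

instance (n : ℕ) : TopologicalSpace (DihedralGroup n) := ⊥
instance (n : ℕ) : DiscreteTopology (DihedralGroup n) := ⟨rfl⟩
instance (p : OddPrime) : Fact p.1.Prime := ⟨p.2.1⟩
instance (p : OddPrime) : NeZero p.1 := ⟨p.2.1.pos.ne'⟩

/-- `N →* D_p`, `n ↦ r (n p i)`. -/
def fN (p : OddPrime) (i : Fin 3) : Multiplicative NPart →* DihedralGroup p.1 where
  toFun n := r (n.toAdd p i)
  map_one' := rfl
  map_mul' a b := rfl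

lemma zmod2_cases : ∀ c : ZMod 2, c = 0 ∨ c = 1 := by decide

/-- `H →* D_p`, `h ↦ 1` or `sr 0` according to `sgn i h`. -/
def fH (p : OddPrime) (i : Fin 3) : Multiplicative HPart →* DihedralGroup p.1 where
  toFun h := if sgn i h.toAdd = 0 then 1 else sr 0
  map_one' := by
    have : sgn i ((1 : Multiplicative HPart).toAdd) = 0 := by
      show sgn i (0, 0) = 0; fin_cases i <;> decide
    show (if sgn i ((1 : Multiplicative HPart).toAdd) = 0 then _ else _) = _
    rw [if_pos this]
  map_mul' a b := by
    show (if sgn i (a.toAdd + b.toAdd) = 0 then _ else _) = _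
    rw [sgn_add]
    rcases zmod2_cases (sgn i a.toAdd) with h1 | h1 <;>
      rcases zmod2_cases (sgn i b.toAdd) with h2 | h2 <;>
      simp [h1, h2, sr_mul_sr, show (1:ZMod 2)+1 = 0 from by decide, show (1:ZMod 2) ≠ 0 from by decide]

lemma fH_compat (p : OddPrime) (i : Fin 3) : ∀ g : Multiplicative HPart,
    (fN p i).comp (actHom g).toMonoidHom
      = (MulAut.conj (fH p i g)).toMonoidHom.comp (fN p i) := by
  intro g
  refine MonoidHom.ext fun n => ?_
  show r ((sgnUnit (sgn i g.toAdd)) • n.toAdd p i)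
    = (if sgn i g.toAdd = 0 then 1 else sr 0) * r (n.toAdd p i)
      * (if sgn i g.toAdd = 0 then 1 else sr 0)⁻¹
  rcases zmod2_cases (sgn i g.toAdd) with h1 | h1
  · simp [h1, sgnUnit]
  · have h0 : sgn i g.toAdd ≠ 0 := by rw [h1]; decide
    have hinv : (sr 0 : DihedralGroup p.1)⁻¹ = sr 0 :=
      inv_eq_of_mul_eq_one_right (sr_mul_self 0)
    rw [h1, if_neg (by decide : (1:ZMod 2) ≠ 0), hinv, sr_mul_r, sr_mul_sr,
      show sgnUnit 1 = -1 from rfl, neg_smul, one_smul]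
    congr 1
    ring

/-- The "dihedral quotient" homomorphism `G →* D_p` remembering coordinate `i` of the
`p`-component and the sign `sgn i` of the `H`-part. -/
def ψ (p : OddPrime) (i : Fin 3) : ExG →* DihedralGroup p.1 :=
  SemidirectProduct.lift (fN p i) (fH p i) (fH_compat p i)

lemma ψ_apply (p : OddPrime) (i : Fin 3) (g : ExG) :
    ψ p i g = r (g.left.toAdd p i) * (if sgn i g.right.toAdd = 0 then 1 else sr 0) := rfl

lemma continuous_ψ (p : OddPrime) (i : Fin 3) : Continuous (ψ p i) := by
  have : ⇑(ψ p i) = (fun d : ZMod p.1 × HPart =>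
      (r d.1 : DihedralGroup p.1) * (if sgn i d.2 = 0 then 1 else sr 0)) ∘
      (fun g : ExG => ((g.left.toAdd p i : ZMod p.1), g.right.toAdd)) := rfl
  rw [this]
  exact continuous_of_discreteTopology.comp
    (((continuous_apply i).comp ((continuous_apply p).comp continuous_exgLeft)).prodMk
      continuous_exgRight)

/-- If `D ⊆ ExG` is dense and `f` has open fibers, every value in the range of `f` is
attained on `D`. -/
lemma dense_attains {T : Type*} (f : ExG → T) (hf : ∀ t, IsOpen (f ⁻¹' {t}))
    {D : Set ExG} (hD : Dense D) {t : T} (ht : t ∈ Set.range f) :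
    ∃ d ∈ D, f d = t := by
  obtain ⟨g, hg⟩ := ht
  obtain ⟨d, hd, hd'⟩ := hD.exists_mem_open (hf t) ⟨g, hg⟩
  exact ⟨d, hd, hd'⟩
instance : DecidableEq OddPrime := fun a b =>
  decidable_of_iff (a.1 = b.1) Subtype.ext_iff.symm

instance : DiscreteTopology (Multiplicative HPart) :=
  inferInstanceAs (DiscreteTopology HPart)

/-- The coordinate fixed by `h` (for `h ≠ 0`). -/
def fix (h : HPart) : Fin 3 := if h = (1, 0) then 0 else if h = (0, 1) then 1 else 2

lemma sgn_fix : ∀ h : HPart, sgn (fix h) h = 0 := by decide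

/-- For each `i` there is `h` with `sgn i h = 1`. -/
def hinvv : Fin 3 → HPart := ![(0, 1), (1, 0), (1, 0)]

lemma sgn_hinvv : ∀ i : Fin 3, sgn i (hinvv i) = 1 := by decide

lemma sgn_zero : ∀ i : Fin 3, sgn i ((0, 0) : HPart) = 0 := by decide

lemma dense_of_top {x y : ExG} (h : (Subgroup.closure {x, y}).topologicalClosure = ⊤) :
    Dense ((Subgroup.closure {x, y} : Set ExG)) := by
  rw [dense_iff_closure_eq, ← Subgroup.topologicalClosure_coe, h]
  rfl

lemma mem_closure_pair_of_dense {x y : ExG}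
    (hD : Dense ((Subgroup.closure {x, y} : Set ExG)))
    {T : Type*} [Group T] [TopologicalSpace T] [DiscreteTopology T] (f : ExG →* T)
    (hc : Continuous f) (t : T) (ht : t ∈ Set.range f) :
    t ∈ Subgroup.closure {f x, f y} := by
  obtain ⟨d, hd, rfl⟩ :=
    dense_attains f (fun t => (isOpen_discrete {t}).preimage hc) hD ht
  have : f d ∈ (Subgroup.closure ({x, y} : Set ExG)).map f := ⟨d, hd, rfl⟩
  rwa [MonoidHom.map_closure, Set.image_pair] at this

lemma closure_pair_one_le {T : Type*} [Group T] (b : T) :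
    Subgroup.closure {(1 : T), b} ≤ Subgroup.zpowers b := by
  rw [Subgroup.closure_le]
  rintro z (rfl | rfl)
  · exact one_mem _
  · exact Subgroup.mem_zpowers _

/-- Dirac delta in `NPart`. -/
def deltaN (p : OddPrime) (j : Fin 3) : NPart :=
  Pi.single p (Pi.single j (1 : ZMod p.1))

lemma deltaN_self (p : OddPrime) (j : Fin 3) : deltaN p j p j = 1 := by
  simp [deltaN]

lemma mul_self_hpart : ∀ c : Multiplicative HPart, c * c = 1 := by decide

lemma zpow_pair (b : Multiplicative HPart) (k : ℤ) : b ^ k = 1 ∨ b ^ k = b := by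
  rcases Int.even_or_odd k with ⟨m, hm⟩ | ⟨m, hm⟩
  · left; rw [hm, zpow_add]; exact mul_self_hpart _
  · right
    rw [hm, zpow_add, zpow_one, two_mul, zpow_add]
    rw [mul_self_hpart]
    exact one_mul b

lemma r_zpow {n : ℕ} (a : ZMod n) (k : ℤ) : ∃ b, (r a : DihedralGroup n) ^ k = r b := by
  have hnat : ∀ m : ℕ, ∃ b, (r a : DihedralGroup n) ^ m = r b := by
    intro m
    induction m with
    | zero => exact ⟨0, rfl⟩
    | succ m ih =>
        obtain ⟨b, hb⟩ := ih
        exact ⟨b + a, by rw [pow_succ, hb, r_mul_r]⟩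
  rcases k with m | m
  · obtain ⟨b, hb⟩ := hnat m; exact ⟨b, by rw [Int.ofNat_eq_coe, zpow_natCast, hb]⟩
  · obtain ⟨b, hb⟩ := hnat (m + 1)
    refine ⟨-b, ?_⟩
    rw [zpow_negSucc, hb]
    exact inv_eq_of_mul_eq_one_right (by rw [r_mul_r, add_neg_cancel, ← one_def])

lemma no_single_generator (p : OddPrime) (g : DihedralGroup p.1)
    (h1 : sr 0 ∈ Subgroup.zpowers g) (h2 : r 1 ∈ Subgroup.zpowers g) : False := by
  cases g with
  | r a =>
      obtain ⟨k, hk⟩ := Subgroup.mem_zpowers_iff.mp h1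
      obtain ⟨b, hb⟩ := _root_.r_zpow a k
      rw [hb] at hk
      nomatch hk
  | sr a =>
      obtain ⟨k, hk⟩ := Subgroup.mem_zpowers_iff.mp h2
      have hsq : (sr a : DihedralGroup p.1) ^ (2 : ℤ) = 1 := by
        rw [zpow_two, sr_mul_self]
      rcases Int.even_or_odd k with ⟨m, hm⟩ | ⟨m, hm⟩
      · rw [hm, ← two_mul, zpow_mul, hsq, one_zpow, one_def] at hk
        have : (0 : ZMod p.1) = 1 := r.inj hk
        exact one_ne_zero this.symm
      · rw [hm, zpow_add, zpow_mul, hsq, one_zpow, zpow_one, one_mul] at hk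
        nomatch hk

/-- The key necessary condition for non-isolation. -/
lemma key {x y : ExG} (hxy : (Subgroup.closure {x, y}).topologicalClosure = ⊤) :
    x.right ≠ 1 ∧ ∀ p : OddPrime, x.left.toAdd p (fix x.right.toAdd) ≠ 0 := by
  have hD := dense_of_top hxy
  constructor
  · intro hx1
    have hmem : ∀ t : Multiplicative HPart, t ∈ Subgroup.zpowers y.right := by
      intro t
      have ht : t ∈ Set.range (rightHom : ExG →* Multiplicative HPart) :=
        ⟨⟨1, t⟩, rfl⟩
      have := mem_closure_pair_of_dense hD rightHom continuous_exgRight t ht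
      rw [show rightHom x = x.right from rfl, show rightHom y = y.right from rfl,
        hx1] at this
      exact closure_pair_one_le _ this
    have e1 := hmem (Multiplicative.ofAdd ((1, 0) : HPart))
    have e2 := hmem (Multiplicative.ofAdd ((0, 1) : HPart))
    obtain ⟨k1, hk1⟩ := Subgroup.mem_zpowers_iff.mp e1
    obtain ⟨k2, hk2⟩ := Subgroup.mem_zpowers_iff.mp e2
    rcases zpow_pair y.right k1 with h | h <;> rw [h] at hk1
    · exact (by decide : (Multiplicative.ofAdd ((1, 0) : HPart)) ≠ 1) hk1.symm
    · rcases zpow_pair y.right k2 with h' | h' <;> rw [h'] at hk2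
      · exact (by decide : (Multiplicative.ofAdd ((0, 1) : HPart)) ≠ 1) hk2.symm
      · exact (by decide : (Multiplicative.ofAdd ((1, 0) : HPart)) ≠
          Multiplicative.ofAdd ((0, 1) : HPart)) (hk1.symm.trans hk2)
  · intro p h0
    set j := fix x.right.toAdd with hj
    have hψx : ψ p j x = 1 := by
      rw [ψ_apply, h0, hj, if_pos (sgn_fix _), mul_one, ← one_def]
    have hmem : ∀ t : DihedralGroup p.1, t ∈ Set.range (ψ p j) →
        t ∈ Subgroup.zpowers (ψ p j y) := by
      intro t ht
      have := mem_closure_pair_of_dense hD (ψ p j) (continuous_ψ p j) t ht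
      rw [hψx] at this
      exact closure_pair_one_le _ this
    have hsr : (sr 0 : DihedralGroup p.1) ∈ Set.range (ψ p j) := by
      refine ⟨⟨1, Multiplicative.ofAdd (hinvv j)⟩, ?_⟩
      rw [ψ_apply]
      have : sgn j ((Multiplicative.ofAdd (hinvv j)).toAdd) = 1 := sgn_hinvv j
      rw [show (⟨1, Multiplicative.ofAdd (hinvv j)⟩ : ExG).right
            = Multiplicative.ofAdd (hinvv j) from rfl, this]
      rw [if_neg (by decide : (1 : ZMod 2) ≠ 0)]
      show r 0 * sr 0 = sr 0
      rw [r_mul_sr, sub_zero]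
    have hr1 : (r 1 : DihedralGroup p.1) ∈ Set.range (ψ p j) := by
      refine ⟨⟨Multiplicative.ofAdd (deltaN p j), 1⟩, ?_⟩
      rw [ψ_apply]
      have h1 : sgn j (((1 : Multiplicative HPart)).toAdd) = 0 := sgn_zero j
      rw [show (⟨Multiplicative.ofAdd (deltaN p j), 1⟩ :
            ExG).right = (1 : Multiplicative HPart) from rfl, h1, if_pos rfl, mul_one]
      show r (deltaN p j p j) = r 1
      rw [deltaN_self]
    exact no_single_generator p _ (hmem _ hsr) (hmem _ hr1)
section MeasurePart

open MeasureTheory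
open scoped ENNReal

variable (S : Finset OddPrime) (j : Fin 3)

/-- The finite quotient recording the `j`-th coordinate at each `p ∈ S` and the `H`-part. -/
abbrev QS : Type := (∀ p : S, ZMod (p : OddPrime).1) × HPart

/-- Projection `G → QS`. -/
def πS (g : ExG) : QS S :=
  (fun p => g.left.toAdd (p : OddPrime) j, g.right.toAdd)

/-- Left translation by `g` as seen on `QS`. -/
def τS (g : ExG) (c : QS S) : QS S :=
  (fun p => g.left.toAdd (p : OddPrime) j + sgnUnit (sgn j g.right.toAdd) • c.1 p,
    g.right.toAdd + c.2)

lemma πS_mul (g x : ExG) : πS S j (g * x) = τS S j g (πS S j x) := rfl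

lemma τS_inj (g : ExG) : Function.Injective (τS S j g) := by
  intro c d h
  have h2 : c.2 = d.2 := add_left_cancel (congrArg Prod.snd h)
  have h1 : c.1 = d.1 := by
    funext q
    have h3 := add_left_cancel (congrArg (fun z : QS S => z.1 q) h)
    calc c.1 q = (sgnUnit (sgn j g.right.toAdd) * sgnUnit (sgn j g.right.toAdd)) • c.1 q := by
          rw [sgnUnit_mul_self, one_smul]
      _ = sgnUnit (sgn j g.right.toAdd) • (sgnUnit (sgn j g.right.toAdd) • c.1 q) := mul_smul _ _ _
      _ = sgnUnit (sgn j g.right.toAdd) • (sgnUnit (sgn j g.right.toAdd) • d.1 q) := by rw [h3]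
      _ = (sgnUnit (sgn j g.right.toAdd) * sgnUnit (sgn j g.right.toAdd)) • d.1 q :=
          (mul_smul _ _ _).symm
      _ = d.1 q := by rw [sgnUnit_mul_self, one_smul]
  exact Prod.ext h1 h2

lemma fiber_preimage (g : ExG) (c : QS S) :
    πS S j ⁻¹' {τS S j g c} = (g⁻¹ * ·) ⁻¹' (πS S j ⁻¹' {c}) := by
  ext x
  simp only [Set.mem_preimage, Set.mem_singleton_iff]
  constructor
  · intro h
    apply τS_inj S j g
    rw [← πS_mul, mul_inv_cancel_left, h]
  · intro h
    have h' : πS S j (g * (g⁻¹ * x)) = τS S j g c := by rw [πS_mul, h]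
    rwa [mul_inv_cancel_left] at h'

lemma continuous_πS : Continuous (πS S j) := by
  refine Continuous.prodMk (continuous_pi fun p => ?_) ?_
  · exact (continuous_apply j).comp
      ((continuous_apply (p : OddPrime)).comp continuous_exgLeft)
  · exact continuous_exgRight

lemma isOpen_fiber (c : QS S) : IsOpen (πS S j ⁻¹' {c}) :=
  (isOpen_discrete {c}).preimage (continuous_πS S j)

/-- Base point of `QS`. -/
def c0 : QS S := (fun _ => 0, 0)

variable (μ : Measure ExG) [μ.IsMulLeftInvariant]

lemma fiber_measure (c : QS S) :
    μ (πS S j ⁻¹' {c}) = μ (πS S j ⁻¹' {c0 S}) := by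
  set g : ExG := ⟨Multiplicative.ofAdd
      (fun q _ => if hq : q ∈ S then c.1 ⟨q, hq⟩ else 0), Multiplicative.ofAdd c.2⟩ with hg
  have hc : τS S j g (c0 S) = c := by
    refine Prod.ext (funext fun p => ?_) ?_
    · show (if hq : (p : OddPrime) ∈ S then c.1 ⟨(p : OddPrime), hq⟩ else 0)
        + sgnUnit (sgn j (Multiplicative.ofAdd c.2).toAdd) • (0 : ZMod (p : OddPrime).1) = c.1 p
      rw [dif_pos p.2, smul_zero, add_zero]
    · show c.2 + 0 = c.2
      rw [add_zero]
  rw [← hc, fiber_preimage]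
  exact measure_preimage_mul μ g⁻¹ _

lemma fiber_total (hnorm : μ Set.univ = 1) :
    (Fintype.card (QS S) : ℝ≥0∞) * μ (πS S j ⁻¹' {c0 S}) = 1 := by
  have hunion : (⋃ c : QS S, πS S j ⁻¹' {c}) = Set.univ := by
    ext x
    simp only [Set.mem_iUnion, Set.mem_preimage, Set.mem_singleton_iff, Set.mem_univ, iff_true]
    exact ⟨πS S j x, rfl⟩
  have hdisj : Pairwise (Function.onFun Disjoint fun c : QS S => πS S j ⁻¹' {c}) := by
    intro c d hcd
    rw [Function.onFun, Set.disjoint_left]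
    rintro x hx hx'
    exact hcd (hx.symm.trans hx')
  have := measure_iUnion (μ := μ) hdisj (fun c => (isOpen_fiber S j c).measurableSet)
  rw [hunion, hnorm] at this
  rw [tsum_congr (fun c => fiber_measure S j μ c), tsum_fintype, Finset.sum_const,
    nsmul_eq_mul, Finset.card_univ] at this
  exact this.symm

lemma fiber_measure_inv (hnorm : μ Set.univ = 1) :
    μ (πS S j ⁻¹' {c0 S}) = ((Fintype.card (QS S) : ℝ≥0∞))⁻¹ := by
  have h := fiber_total S j μ hnorm
  have hn0 : (Fintype.card (QS S) : ℝ≥0∞) ≠ 0 :=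
    Nat.cast_ne_zero.mpr Fintype.card_ne_zero
  have hnt : (Fintype.card (QS S) : ℝ≥0∞) ≠ ⊤ := ENNReal.natCast_ne_top _
  calc μ (πS S j ⁻¹' {c0 S})
      = (Fintype.card (QS S) : ℝ≥0∞)⁻¹ * ((Fintype.card (QS S) : ℝ≥0∞))
        * μ (πS S j ⁻¹' {c0 S}) := by rw [ENNReal.inv_mul_cancel hn0 hnt, one_mul]
    _ = (Fintype.card (QS S) : ℝ≥0∞)⁻¹ := by rw [mul_assoc, h, mul_one]

end MeasurePart
section Counting

open MeasureTheory
open scoped ENNReal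

variable (S : Finset OddPrime)

/-- Candidate non-isolated vertices with `H`-part `h0`. -/
def Ah (h0 : HPart) : Set ExG :=
  {x | x.right.toAdd = h0 ∧ ∀ p : OddPrime, x.left.toAdd p (fix h0) ≠ 0}

/-- The "bad" classes in `QS`. -/
def Bset (h0 : HPart) : Finset (QS S) :=
  Finset.univ.filter (fun c => c.2 = h0 ∧ ∀ p : S, c.1 p ≠ 0)

lemma Ah_subset_biUnion (h0 : HPart) :
    Ah h0 ⊆ ⋃ c ∈ Bset S h0, πS S (fix h0) ⁻¹' {c} := by
  intro x hx
  have hc : πS S (fix h0) x ∈ Bset S h0 := by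
    rw [Bset, Finset.mem_filter]
    exact ⟨Finset.mem_univ _, hx.1, fun p => hx.2 (p : OddPrime)⟩
  exact Set.mem_biUnion hc rfl

lemma card_QS : Fintype.card (QS S) = (∏ p ∈ S.attach, (p : OddPrime).1) * 4 := by
  have h4 : Fintype.card HPart = 4 := rfl
  rw [Fintype.card_prod, Fintype.card_pi, Finset.univ_eq_attach, h4]
  exact congrArg (· * 4) (Finset.prod_congr rfl fun p _ => ZMod.card _)

lemma card_nonzero (q : OddPrime) : Fintype.card {a : ZMod q.1 // a ≠ 0} = q.1 - 1 := by
  have h := Fintype.card_subtype_compl (fun a : ZMod q.1 => a = 0)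
  rw [Fintype.card_subtype_eq (0 : ZMod q.1), ZMod.card] at h
  exact h

/-- Equivalence counting the bad classes. -/
def eBad (h0 : HPart) : {c : QS S // c.2 = h0 ∧ ∀ p : S, c.1 p ≠ 0} ≃
    (∀ p : S, {a : ZMod (p : OddPrime).1 // a ≠ 0}) where
  toFun c p := ⟨c.1.1 p, c.2.2 p⟩
  invFun f := ⟨((fun p => (f p).1), h0), rfl, fun p => (f p).2⟩
  left_inv c := Subtype.ext (Prod.ext rfl c.2.1.symm)
  right_inv f := rfl

lemma card_Bset (h0 : HPart) :
    (Bset S h0).card = ∏ p ∈ S.attach, ((p : OddPrime).1 - 1) := by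
  rw [Bset, ← Fintype.card_subtype, Fintype.card_congr (eBad S h0), Fintype.card_pi,
    Finset.univ_eq_attach]
  exact Finset.prod_congr rfl fun p _ => card_nonzero _

variable (μ : Measure ExG) [μ.IsMulLeftInvariant]

lemma measure_Ah_le (hnorm : μ Set.univ = 1) (h0 : HPart) :
    μ (Ah h0) ≤ ((∏ p ∈ S.attach, ((p : OddPrime).1 - 1) : ℕ) : ℝ≥0∞)
      * ((Fintype.card (QS S) : ℝ≥0∞))⁻¹ := by
  calc μ (Ah h0) ≤ μ (⋃ c ∈ Bset S h0, πS S (fix h0) ⁻¹' {c}) :=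
        measure_mono (Ah_subset_biUnion S h0)
    _ ≤ ∑ c ∈ Bset S h0, μ (πS S (fix h0) ⁻¹' {c}) := measure_biUnion_finset_le _ _
    _ = ∑ _c ∈ Bset S h0, μ (πS S (fix h0) ⁻¹' {c0 S}) :=
        Finset.sum_congr rfl fun c _ => fiber_measure S (fix h0) μ c
    _ = (Bset S h0).card • μ (πS S (fix h0) ⁻¹' {c0 S}) := (Finset.sum_const _)
    _ = ((∏ p ∈ S.attach, ((p : OddPrime).1 - 1) : ℕ) : ℝ≥0∞)
          * ((Fintype.card (QS S) : ℝ≥0∞))⁻¹ := by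
        rw [card_Bset, fiber_measure_inv S (fix h0) μ hnorm, nsmul_eq_mul]

lemma hpart_cases : ∀ h : HPart, h ≠ 0 → h = (1, 0) ∨ h = (0, 1) ∨ h = (1, 1) := by decide

lemma measure_A_le (hnorm : μ Set.univ = 1) :
    μ {x : ExG | ∃ y : ExG, (Subgroup.closure {x, y}).topologicalClosure = ⊤}
      ≤ ((∏ p ∈ S.attach, ((p : OddPrime).1 - 1) : ℕ) : ℝ≥0∞)
        / ((∏ p ∈ S.attach, (p : OddPrime).1 : ℕ) : ℝ≥0∞) := by
  set K : ℕ := ∏ p ∈ S.attach, ((p : OddPrime).1 - 1) with hK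
  set L : ℕ := ∏ p ∈ S.attach, (p : OddPrime).1 with hL
  have hsub : {x : ExG | ∃ y : ExG, (Subgroup.closure {x, y}).topologicalClosure = ⊤}
      ⊆ Ah (1, 0) ∪ Ah (0, 1) ∪ Ah (1, 1) := by
    rintro x ⟨y, hy⟩
    obtain ⟨hx1, hx2⟩ := key hy
    have h0 : x.right.toAdd ≠ 0 := by
      intro hc
      exact hx1 (show x.right = 1 from hc)
    rcases hpart_cases _ h0 with h | h | h
    · exact Or.inl (Or.inl ⟨h, by rw [← h]; exact hx2⟩)
    · exact Or.inl (Or.inr ⟨h, by rw [← h]; exact hx2⟩)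
    · exact Or.inr ⟨h, by rw [← h]; exact hx2⟩
  have hb := measure_Ah_le S μ hnorm
  have hL0 : (L : ℝ≥0∞) ≠ 0 := by
    rw [hL]
    refine Nat.cast_ne_zero.mpr (Finset.prod_ne_zero_iff.mpr fun p _ => ?_)
    exact (p : OddPrime).2.1.pos.ne'
  have hL_top : (L : ℝ≥0∞) ≠ ⊤ := ENNReal.natCast_ne_top _
  have hcard : ((Fintype.card (QS S) : ℝ≥0∞))⁻¹ = ((L : ℝ≥0∞) * 4)⁻¹ := by
    rw [card_QS, ← hL, Nat.cast_mul, Nat.cast_ofNat]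
  calc μ {x : ExG | ∃ y : ExG, (Subgroup.closure {x, y}).topologicalClosure = ⊤}
      ≤ μ (Ah (1, 0) ∪ Ah (0, 1) ∪ Ah (1, 1)) := measure_mono hsub
    _ ≤ μ (Ah (1, 0)) + μ (Ah (0, 1)) + μ (Ah (1, 1)) :=
        le_trans (measure_union_le _ _) (add_le_add (measure_union_le _ _) le_rfl)
    _ ≤ (K : ℝ≥0∞) * ((Fintype.card (QS S) : ℝ≥0∞))⁻¹
        + (K : ℝ≥0∞) * ((Fintype.card (QS S) : ℝ≥0∞))⁻¹
        + (K : ℝ≥0∞) * ((Fintype.card (QS S) : ℝ≥0∞))⁻¹ :=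
        add_le_add (add_le_add (hb _) (hb _)) (hb _)
    _ = 3 * ((K : ℝ≥0∞) * ((L : ℝ≥0∞) * 4)⁻¹) := by rw [hcard]; ring
    _ = (3 * 4⁻¹) * ((K : ℝ≥0∞) * (L : ℝ≥0∞)⁻¹) := by
        rw [ENNReal.mul_inv (Or.inl hL0) (Or.inl hL_top)]; ring
    _ ≤ 1 * ((K : ℝ≥0∞) * (L : ℝ≥0∞)⁻¹) := by
        refine mul_le_mul_left ?_ _
        calc (3 : ℝ≥0∞) * 4⁻¹ ≤ 4 * 4⁻¹ :=
              mul_le_mul_left (by norm_num) _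
          _ = 1 := ENNReal.mul_inv_cancel (by norm_num) (by norm_num)
    _ = (K : ℝ≥0∞) / (L : ℝ≥0∞) := by rw [one_mul, div_eq_mul_inv]

end Counting
section Analysis

open MeasureTheory
open scoped ENNReal

lemma odd_prime_sum_unbounded (C : ℝ) :
    ∃ S : Finset OddPrime, C < ∑ p ∈ S, (1 / (p.1 : ℝ)) := by
  by_contra hcon
  push_neg at hcon
  have hsum : Summable (fun p : OddPrime => (1 : ℝ) / (p.1 : ℝ)) :=
    summable_of_sum_le (fun p => by positivity) hcon
  have hsub : Summable ((fun n : ℕ => (1 : ℝ) / n) ∘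
      ((↑) : {p : ℕ // p ∈ {q : ℕ | Nat.Prime q ∧ q ≠ 2}} → ℕ)) := hsum
  rw [summable_subtype_iff_indicator] at hsub
  have h2 : Summable (({2} : Set ℕ).indicator (fun n : ℕ => (1 : ℝ) / n)) :=
    summable_of_finite_support ((Set.finite_singleton 2).subset Set.support_indicator_subset)
  have hdisj : Disjoint {q : ℕ | Nat.Prime q ∧ q ≠ 2} ({2} : Set ℕ) := by
    rw [Set.disjoint_left]
    rintro a ⟨_, ha⟩ rfl
    exact ha rfl
  have hset : {p : ℕ | Nat.Prime p} = {q : ℕ | Nat.Prime q ∧ q ≠ 2} ∪ {2} := by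
    ext n
    constructor
    · intro hn
      by_cases h : n = 2
      · exact Or.inr h
      · exact Or.inl ⟨hn, h⟩
    · rintro (⟨hn, _⟩ | rfl)
      · exact hn
      · exact Nat.prime_two
  have htot := hsub.add h2
  rw [← Set.indicator_union_of_disjoint hdisj, ← hset] at htot
  exact not_summable_one_div_on_primes htot

lemma exists_small_real (ε : ℝ) (hε : 0 < ε) :
    ∃ S : Finset OddPrime,
      ((∏ p ∈ S.attach, ((p : OddPrime).1 - 1) : ℕ) : ℝ)
        / ((∏ p ∈ S.attach, (p : OddPrime).1 : ℕ) : ℝ) < ε := by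
  obtain ⟨S, hS⟩ := odd_prime_sum_unbounded (-Real.log ε)
  refine ⟨S, ?_⟩
  have hpos : ∀ p : OddPrime, (0 : ℝ) < (p.1 : ℝ) := fun p =>
    Nat.cast_pos.mpr p.2.1.pos
  have hfactor : ∀ p : OddPrime, (((p.1 - 1 : ℕ) : ℝ)) / (p.1 : ℝ)
      ≤ Real.exp (-(1 / (p.1 : ℝ))) := by
    intro p
    have h1 : ((p.1 - 1 : ℕ) : ℝ) = (p.1 : ℝ) - 1 := by
      rw [Nat.cast_sub p.2.1.one_lt.le]
      norm_num
    have h2 : ((p.1 : ℝ) - 1) / (p.1 : ℝ) = -(1 / (p.1 : ℝ)) + 1 := by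
      rw [sub_div, div_self (hpos p).ne']; ring
    rw [h1, h2]
    exact Real.add_one_le_exp _
  calc ((∏ p ∈ S.attach, ((p : OddPrime).1 - 1) : ℕ) : ℝ)
        / ((∏ p ∈ S.attach, (p : OddPrime).1 : ℕ) : ℝ)
      = ∏ p ∈ S.attach, (((((p : OddPrime).1 - 1) : ℕ) : ℝ) / (((p : OddPrime).1 : ℕ) : ℝ)) := by
        rw [Nat.cast_prod, Nat.cast_prod, Finset.prod_div_distrib]
    _ ≤ ∏ p ∈ S.attach, Real.exp (-(1 / ((p : OddPrime).1 : ℝ))) := by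
        refine Finset.prod_le_prod (fun p _ => by positivity) (fun p _ => hfactor _)
    _ = Real.exp (∑ p ∈ S.attach, -(1 / ((p : OddPrime).1 : ℝ))) := (Real.exp_sum _ _).symm
    _ = Real.exp (-(∑ p ∈ S.attach, 1 / ((p : OddPrime).1 : ℝ))) := by
        rw [Finset.sum_neg_distrib]
    _ = Real.exp (-(∑ p ∈ S, 1 / ((p : OddPrime).1 : ℝ))) := by
        rw [Finset.sum_attach S (fun p => 1 / ((p : OddPrime).1 : ℝ))]
    _ < Real.exp (Real.log ε) := by
        rw [Real.exp_lt_exp]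
        linarith
    _ = ε := Real.exp_log hε

lemma exists_small (ε : ℝ) (hε : 0 < ε) :
    ∃ S : Finset OddPrime,
      ((∏ p ∈ S.attach, ((p : OddPrime).1 - 1) : ℕ) : ℝ≥0∞)
        / ((∏ p ∈ S.attach, (p : OddPrime).1 : ℕ) : ℝ≥0∞) < ENNReal.ofReal ε := by
  obtain ⟨S, hS⟩ := exists_small_real ε hε
  refine ⟨S, ?_⟩
  set K : ℕ := ∏ p ∈ S.attach, ((p : OddPrime).1 - 1) with hK
  set L : ℕ := ∏ p ∈ S.attach, (p : OddPrime).1 with hL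
  have hLpos : (0 : ℝ) < (L : ℝ) := by
    rw [hL]
    push_cast
    refine Finset.prod_pos fun p _ => ?_
    exact_mod_cast Nat.cast_pos.mpr (p : OddPrime).2.1.pos
  have heq : (K : ℝ≥0∞) / (L : ℝ≥0∞) = ENNReal.ofReal ((K : ℝ) / (L : ℝ)) := by
    rw [ENNReal.ofReal_div_of_pos hLpos, ENNReal.ofReal_natCast, ENNReal.ofReal_natCast]
  rw [heq]
  exact (ENNReal.ofReal_lt_ofReal_iff hε).mpr hS

end Analysis


/-- The set of non-isolated vertices of the generating graph of
`G = (∏_{p odd} C_p³) ⋊ C₂²` has measure zero with respect to the normalized Haar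
measure on `G`. -/
theorem stmt_15 (μ : MeasureTheory.Measure ExG) (hμ : μ.IsHaarMeasure)
    (hnorm : μ Set.univ = 1) :
    μ {x : ExG | ∃ y : ExG, (Subgroup.closure {x, y}).topologicalClosure = ⊤} = 0 := by
  haveI := hμ
  set A := {x : ExG | ∃ y : ExG, (Subgroup.closure {x, y}).topologicalClosure = ⊤} with hA
  by_contra hA0
  have hle1 : μ A ≤ 1 := hnorm ▸ MeasureTheory.measure_mono (Set.subset_univ _)
  have hfin : μ A ≠ ⊤ := (lt_of_le_of_lt hle1 ENNReal.one_lt_top).ne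
  have hpos : 0 < (μ A).toReal := ENNReal.toReal_pos hA0 hfin
  obtain ⟨S, hS⟩ := exists_small ((μ A).toReal) hpos
  have hb := measure_A_le S μ hnorm
  rw [← hA] at hb
  have : μ A < ENNReal.ofReal ((μ A).toReal) := lt_of_le_of_lt hb hS
  rw [ENNReal.ofReal_toReal hfin] at this
  exact lt_irrefl _ this
end

section
/- Let G be a finite group and 1 = N₀ < N₁ < ⋯ < N_t = G a chief series. For g ∈ G non-isolated in Γ(G), the degree δ_G(g) equals the product over i of δ_{G/N_{i−1}, N_i/N_{i−1}}(g), where δ_{G/N_{i−1}, N_i/N_{i−1}}(g) counts, for a fixed x with ⟨g, x⟩N_i/N_{i−1} = G/N_{i−1} in G/N_{i−1}, the number of elements n of N_i/N_{i−1} with ⟨gN_{i−1}, xnN_{i−1}⟩ = G/N_{i−1} (independent of the choice of x). -/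
open Subgroup Set Pointwise

section Aux

variable {G : Type*} [Group G]

private lemma aux_sup (g y n : G) (N : Subgroup G) (hn : n ∈ N) :
    Subgroup.closure {g, y * n} ⊔ N = Subgroup.closure {g, y} ⊔ N := by
  have hg1 : g ∈ Subgroup.closure {g, y} ⊔ N :=
    Subgroup.mem_sup_left (subset_closure (by simp))
  have hy1 : y ∈ Subgroup.closure {g, y} ⊔ N :=
    Subgroup.mem_sup_left (subset_closure (by simp))
  have hg2 : g ∈ Subgroup.closure {g, y * n} ⊔ N :=
    Subgroup.mem_sup_left (subset_closure (by simp))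
  have hyn2 : y * n ∈ Subgroup.closure {g, y * n} ⊔ N :=
    Subgroup.mem_sup_left (subset_closure (by simp))
  apply le_antisymm
  · refine sup_le ?_ le_sup_right
    rw [closure_le]
    rintro z (rfl | rfl)
    · exact hg1
    · exact mul_mem hy1 (Subgroup.mem_sup_right hn)
  · refine sup_le ?_ le_sup_right
    rw [closure_le]
    rintro z (rfl | rfl)
    · exact hg2
    · simpa using mul_mem hyn2 (inv_mem (Subgroup.mem_sup_right hn))

private lemma aux_coset[Finite G] (N H : Subgroup G) [N.Normal] (hHN : H ⊔ N = ⊤) (y : G) :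
    Set.ncard {n : G | n ∈ N ∧ y * n ∈ H} = Nat.card (H ⊓ N : Subgroup G) := by
  have hy : y ∈ (H : Set G) * (N : Set G) := by
    rw [show ((H : Set G) * (N : Set G)) = ((H ⊔ N : Subgroup G) : Set G) from (Subgroup.mul_normal H N).symm, hHN]; exact Subgroup.mem_top y
  obtain ⟨h, hh, n0, hn0, rfl⟩ := hy
  have hset : {n : G | n ∈ N ∧ (h * n0) * n ∈ H} = (fun m => n0⁻¹ * m) '' ((H ⊓ N : Subgroup G) : Set G) := by
    ext n
    constructor
    · rintro ⟨hnN, hnH⟩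
      refine ⟨n0 * n, ⟨?_, mul_mem hn0 hnN⟩, by group⟩
      have : h⁻¹ * ((h * n0) * n) ∈ H := mul_mem (inv_mem hh) hnH
      simpa [mul_assoc] using this
    · rintro ⟨m, ⟨hmH, hmN⟩, rfl⟩
      refine ⟨mul_mem (inv_mem hn0) hmN, ?_⟩
      have heq : (h * n0) * (n0⁻¹ * m) = h * m := by group
      rw [heq]; exact mul_mem hh hmH
  rw [hset, Set.ncard_image_of_injective _ (mul_right_injective _)]
  exact (Nat.card_coe_set_eq _).symm

private lemma card_lt_of_lt [Finite G] {K H : Subgroup G} (h : K < H) : Nat.card K < Nat.card H := by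
  have h1 : ((K : Set G)).ncard < ((H : Set G)).ncard :=
    Set.ncard_lt_ncard (SetLike.coe_ssubset_coe.2 h) (Set.toFinite _)
  simpa [← Nat.card_coe_set_eq] using h1

private lemma aux_E[Finite G] (g : G) (M N : Subgroup G) [N.Normal] :
    ∀ (H : Subgroup G) (y y' : G), Subgroup.closure {g, y} ⊔ N = ⊤ →
      Subgroup.closure {g, y'} ⊔ N = ⊤ →
    Set.ncard {n : G | n ∈ N ∧ Subgroup.closure {g, y * n} ⊔ M = H} =
      Set.ncard {n : G | n ∈ N ∧ Subgroup.closure {g, y' * n} ⊔ M = H} := by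
  classical
  have : Fintype G := Fintype.ofFinite G
  have : Fintype (Subgroup G) := Fintype.ofFinite _
  suffices hmain : ∀ (m : ℕ) (H : Subgroup G), Nat.card H ≤ m → ∀ (y y' : G),
      Subgroup.closure {g, y} ⊔ N = ⊤ → Subgroup.closure {g, y'} ⊔ N = ⊤ →
      Set.ncard {n : G | n ∈ N ∧ Subgroup.closure {g, y * n} ⊔ M = H} =
        Set.ncard {n : G | n ∈ N ∧ Subgroup.closure {g, y' * n} ⊔ M = H} by
    exact fun H => hmain (Nat.card H) H le_rfl
  intro m
  induction m using Nat.strong_induction_on with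
  | _ m IH =>
  intro H hHm y y' hy hy'
  by_cases hP : g ∈ H ∧ M ≤ H ∧ H ⊔ N = ⊤
  case neg =>
    have empty : ∀ z : G, Subgroup.closure {g, z} ⊔ N = ⊤ →
        {n : G | n ∈ N ∧ Subgroup.closure {g, z * n} ⊔ M = H} = ∅ := by
      intro z hz
      ext n
      simp only [Set.mem_setOf_eq, Set.mem_empty_iff_false, iff_false]
      rintro ⟨hnN, hK⟩
      refine hP ⟨?_, ?_, ?_⟩
      · rw [← hK]; exact Subgroup.mem_sup_left (subset_closure (by simp))
      · rw [← hK]; exact le_sup_right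
      · rw [← hK, sup_right_comm, aux_sup g z n N hnN, hz, top_sup_eq]
    rw [empty y hy, empty y' hy']
  case pos =>
    obtain ⟨hgH, hMH, hHN⟩ := hP
    have key : ∀ z : G, Subgroup.closure {g, z} ⊔ N = ⊤ →
        Nat.card (H ⊓ N : Subgroup G) =
          ∑ K ∈ Finset.univ.filter (· ≤ H),
            Set.ncard {n : G | n ∈ N ∧ Subgroup.closure {g, z * n} ⊔ M = K} := by
      intro z hz
      rw [← aux_coset N H hHN z]
      rw [Set.ncard_eq_toFinset_card']
      rw [Finset.card_eq_sum_card_fiberwise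
        (f := fun n => Subgroup.closure {g, z * n} ⊔ M)
        (t := Finset.univ.filter (· ≤ H)) ?_]
      · refine Finset.sum_congr rfl ?_
        intro K hK
        rw [Finset.mem_filter] at hK
        rw [Set.ncard_eq_toFinset_card']
        congr 1
        ext n
        simp only [Set.mem_toFinset, Finset.mem_filter, Set.mem_setOf_eq]
        constructor
        · rintro ⟨⟨hnN, _⟩, hfn⟩; exact ⟨hnN, hfn⟩
        · rintro ⟨hnN, hfn⟩
          refine ⟨⟨hnN, ?_⟩, hfn⟩
          have : z * n ∈ Subgroup.closure {g, z * n} ⊔ M :=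
            Subgroup.mem_sup_left (subset_closure (by simp))
          rw [hfn] at this
          exact hK.2 this
      · intro n hn
        rw [Finset.mem_coe, Set.mem_toFinset] at hn
        rw [Finset.mem_coe, Finset.mem_filter]
        refine ⟨Finset.mem_univ _, ?_⟩
        refine sup_le ?_ hMH
        rw [closure_le]
        rintro w (rfl | rfl)
        · exact hgH
        · exact hn.2
    have hk1 := key y hy
    have hk2 := key y' hy'
    have hHmem : H ∈ Finset.univ.filter (· ≤ H) := by
      rw [Finset.mem_filter]; exact ⟨Finset.mem_univ _, le_refl H⟩
    rw [← Finset.add_sum_erase _ _ hHmem] at hk1 hk2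
    have herase : ∑ K ∈ (Finset.univ.filter (· ≤ H)).erase H,
        Set.ncard {n : G | n ∈ N ∧ Subgroup.closure {g, y * n} ⊔ M = K} =
        ∑ K ∈ (Finset.univ.filter (· ≤ H)).erase H,
        Set.ncard {n : G | n ∈ N ∧ Subgroup.closure {g, y' * n} ⊔ M = K} := by
      refine Finset.sum_congr rfl ?_
      intro K hK
      rw [Finset.mem_erase, Finset.mem_filter] at hK
      have hKH : K < H := lt_of_le_of_ne hK.2.2 hK.1
      exact IH (Nat.card K) (lt_of_lt_of_le (card_lt_of_lt hKH) hHm) K le_rfl y y' hy hy'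
    omega

private lemma aux_step[Finite G] (g : G) (M N : Subgroup G) [N.Normal] (hMN : M ≤ N)
    (x : G) (hx : Subgroup.closure {g, x} ⊔ N = ⊤) :
    Set.ncard {z : G | Subgroup.closure {g, z} ⊔ M = ⊤} * Nat.card N =
      Set.ncard {z : G | Subgroup.closure {g, z} ⊔ N = ⊤} *
        Set.ncard {n : G | n ∈ N ∧ Subgroup.closure {g, x * n} ⊔ M = ⊤} := by
  classical
  have : Fintype G := Fintype.ofFinite G
  set DN : Finset G := ({z : G | Subgroup.closure {g, z} ⊔ N = ⊤} : Set G).toFinset with hDN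
  set DM : Finset G := ({z : G | Subgroup.closure {g, z} ⊔ M = ⊤} : Set G).toFinset with hDM
  set T : Finset (G × G) := Finset.univ.filter (fun p : G × G =>
    p.2 ∈ N ∧ Subgroup.closure {g, p.1} ⊔ N = ⊤ ∧
      Subgroup.closure {g, p.1 * p.2} ⊔ M = ⊤) with hT
  -- count 1 : fiber over first coordinate
  have count1 : T.card = DN.card *
      Set.ncard {n : G | n ∈ N ∧ Subgroup.closure {g, x * n} ⊔ M = ⊤} := by
    rw [Finset.card_eq_sum_card_fiberwise (f := fun p : G × G => p.1) (t := DN)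
      (fun p hp => by
        rw [hT, Finset.mem_coe, Finset.mem_filter] at hp
        rw [hDN, Finset.mem_coe, Set.mem_toFinset]
        exact hp.2.2.1)]
    rw [show ∑ b ∈ DN, (T.filter (fun a => a.1 = b)).card = ∑ _b ∈ DN,
        Set.ncard {n : G | n ∈ N ∧ Subgroup.closure {g, x * n} ⊔ M = ⊤} from
      Finset.sum_congr rfl (fun z hz => ?_), Finset.sum_const, smul_eq_mul]
    rw [hDN, Set.mem_toFinset, Set.mem_setOf_eq] at hz
    have hfiber : T.filter (fun p : G × G => p.1 = z) =
        ({n : G | n ∈ N ∧ Subgroup.closure {g, z * n} ⊔ M = ⊤} : Set G).toFinset.image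
          (fun n => (z, n)) := by
      ext p
      simp only [hT, Finset.mem_filter, Finset.mem_univ, true_and, Finset.mem_image,
        Set.mem_toFinset, Set.mem_setOf_eq]
      constructor
      · rintro ⟨⟨h1, h2, h3⟩, rfl⟩
        exact ⟨p.2, ⟨h1, h3⟩, rfl⟩
      · rintro ⟨n, ⟨h1, h2⟩, rfl⟩
        exact ⟨⟨h1, hz, h2⟩, rfl⟩
    rw [hfiber, Finset.card_image_of_injective _ (fun a b h => congrArg Prod.snd h),
      ← Set.ncard_eq_toFinset_card']
    exact aux_E g M N ⊤ z x hz hx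
  -- count 2 : fiber over product
  have count2 : T.card = DM.card * Nat.card N := by
    rw [Finset.card_eq_sum_card_fiberwise (f := fun p : G × G => p.1 * p.2) (t := DM)
      (fun p hp => by
        rw [hT, Finset.mem_coe, Finset.mem_filter] at hp
        rw [hDM, Finset.mem_coe, Set.mem_toFinset]
        exact hp.2.2.2)]
    rw [show ∑ b ∈ DM, (T.filter (fun a => a.1 * a.2 = b)).card = ∑ _b ∈ DM,
        Nat.card N from Finset.sum_congr rfl (fun w hw => ?_), Finset.sum_const, smul_eq_mul]
    rw [hDM, Set.mem_toFinset, Set.mem_setOf_eq] at hw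
    have hfiber : T.filter (fun p : G × G => p.1 * p.2 = w) =
        ((N : Set G)).toFinset.image (fun n => (w * n⁻¹, n)) := by
      ext p
      simp only [hT, Finset.mem_filter, Finset.mem_univ, true_and, Finset.mem_image,
        Set.mem_toFinset, SetLike.mem_coe]
      constructor
      · rintro ⟨⟨h1, h2, h3⟩, hpw⟩
        refine ⟨p.2, h1, ?_⟩
        have : w * p.2⁻¹ = p.1 := by rw [← hpw]; group
        rw [this]
      · rintro ⟨n, hn, rfl⟩
        have hwn : (w * n⁻¹) * n = w := by group
        refine ⟨⟨hn, ?_, ?_⟩, hwn⟩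
        · rw [aux_sup g w n⁻¹ N (inv_mem hn)]
          rw [eq_top_iff, ← hw]
          exact sup_le_sup_left hMN _
        · rw [hwn]; exact hw
    rw [hfiber, Finset.card_image_of_injective _ (fun a b h => congrArg Prod.snd h)]
    rw [← Set.ncard_eq_toFinset_card', ← Nat.card_coe_set_eq]
    rfl
  rw [Set.ncard_eq_toFinset_card' {z : G | Subgroup.closure {g, z} ⊔ M = ⊤},
    Set.ncard_eq_toFinset_card' {z : G | Subgroup.closure {g, z} ⊔ N = ⊤}]
  exact count2.symm.trans count1

end Aux

/-- Multiplicativity of the degree in the generating graph along a chief series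
`1 = N₀ < N₁ < ⋯ < N_t = G` of a finite 2-generated group `G`.  For a non-isolated vertex
`g` and any choice of elements `x i` generating `G` together with `g` modulo `N_{i+1}`
(equivalently, `⟨g, x i⟩ N_{i+1} = G`), the degree `δ_G(g)` equals the product over `i` of
the numbers `δ_{G/N_i, N_{i+1}/N_i}(g)` which count the elements `n` of `N_{i+1}/N_i`
with `⟨g N_i, (x i) n N_i⟩ = G/N_i`; here these factor counts are expressed inside `G`:
the number of `n ∈ N_{i+1}` with `⟨g, (x i) n⟩ N_i = G`, divided by `|N_i|`, which is why
the identity below carries the factor `∏ i, |N_i|` on the left-hand side. -/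
theorem stmt_18 {G : Type*} [Group G] [Finite G]
    (h2 : ∃ a b : G, Subgroup.closure {a, b} = ⊤)
    (t : ℕ) (σ : Fin (t + 1) → Subgroup G) (hmono : StrictMono σ)
    (h0 : σ 0 = ⊥) (htop : σ (Fin.last t) = ⊤)
    (hnorm : ∀ i, (σ i).Normal)
    (hchief : ∀ i : Fin t, ∀ K : Subgroup G, K.Normal →
      σ i.castSucc ≤ K → K ≤ σ i.succ → K = σ i.castSucc ∨ K = σ i.succ)
    (g : G) (hg : ∃ y : G, Subgroup.closure {g, y} = ⊤)
    (x : Fin t → G)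
    (hx : ∀ i : Fin t, Subgroup.closure {g, x i} ⊔ σ i.succ = ⊤) :
    Set.ncard {z : G | Subgroup.closure {g, z} = ⊤} *
        ∏ i : Fin t, Nat.card (σ i.castSucc) =
      ∏ i : Fin t, Set.ncard
        {n : G | n ∈ σ i.succ ∧ Subgroup.closure {g, x i * n} ⊔ σ i.castSucc = ⊤} := by
  classical
  set σ' : ℕ → Subgroup G := fun j => if h : j < t + 1 then σ ⟨j, h⟩ else ⊤ with hσ'
  set x' : ℕ → G := fun j => if h : j < t then x ⟨j, h⟩ else 1 with hx'
  have hσeq : ∀ (j : ℕ) (h : j < t + 1), σ' j = σ ⟨j, h⟩ := fun j h => dif_pos h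
  have hxeq : ∀ (j : ℕ) (h : j < t), x' j = x ⟨j, h⟩ := fun j h => dif_pos h
  have main : ∀ k, k ≤ t →
      Set.ncard {z : G | Subgroup.closure {g, z} ⊔ σ' 0 = ⊤} *
          ∏ j ∈ Finset.range k, Nat.card (σ' (j + 1)) =
        Set.ncard {z : G | Subgroup.closure {g, z} ⊔ σ' k = ⊤} *
          ∏ j ∈ Finset.range k,
            Set.ncard {n : G | n ∈ σ' (j + 1) ∧ Subgroup.closure {g, x' j * n} ⊔ σ' j = ⊤} := by
    intro k
    induction k with
    | zero => simp
    | succ k ih =>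
      intro hk1
      have hk' : k ≤ t := by omega
      haveI : (σ' (k + 1)).Normal := by rw [hσeq (k + 1) (by omega)]; exact hnorm _
      have hMN : σ' k ≤ σ' (k + 1) := by
        rw [hσeq k (by omega), hσeq (k + 1) (by omega)]
        exact (hmono (show (⟨k, by omega⟩ : Fin (t+1)) < ⟨k+1, by omega⟩ by
          simp [Fin.mk_lt_mk])).le
      have hxk : Subgroup.closure {g, x' k} ⊔ σ' (k + 1) = ⊤ := by
        rw [hxeq k (by omega), hσeq (k + 1) (by omega)]
        have h5 := hx ⟨k, by omega⟩
        rwa [show σ ((⟨k, by omega⟩ : Fin t).succ) = σ ⟨k + 1, by omega⟩ from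
          congrArg σ (Fin.ext rfl)] at h5
      have step := aux_step g (σ' k) (σ' (k + 1)) hMN (x' k) hxk
      rw [Finset.prod_range_succ, Finset.prod_range_succ]
      calc Set.ncard {z : G | Subgroup.closure {g, z} ⊔ σ' 0 = ⊤} *
            ((∏ j ∈ Finset.range k, Nat.card (σ' (j + 1))) * Nat.card (σ' (k + 1)))
          = (Set.ncard {z : G | Subgroup.closure {g, z} ⊔ σ' 0 = ⊤} *
            ∏ j ∈ Finset.range k, Nat.card (σ' (j + 1))) * Nat.card (σ' (k + 1)) := by ring
        _ = (Set.ncard {z : G | Subgroup.closure {g, z} ⊔ σ' k = ⊤} *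
            ∏ j ∈ Finset.range k, Set.ncard {n : G | n ∈ σ' (j + 1) ∧
              Subgroup.closure {g, x' j * n} ⊔ σ' j = ⊤}) * Nat.card (σ' (k + 1)) := by
            rw [ih hk']
        _ = (Set.ncard {z : G | Subgroup.closure {g, z} ⊔ σ' k = ⊤} * Nat.card (σ' (k + 1))) *
            ∏ j ∈ Finset.range k, Set.ncard {n : G | n ∈ σ' (j + 1) ∧
              Subgroup.closure {g, x' j * n} ⊔ σ' j = ⊤} := by ring
        _ = (Set.ncard {z : G | Subgroup.closure {g, z} ⊔ σ' (k + 1) = ⊤} *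
            Set.ncard {n : G | n ∈ σ' (k + 1) ∧ Subgroup.closure {g, x' k * n} ⊔ σ' k = ⊤}) *
            ∏ j ∈ Finset.range k, Set.ncard {n : G | n ∈ σ' (j + 1) ∧
              Subgroup.closure {g, x' j * n} ⊔ σ' j = ⊤} := by rw [step]
        _ = _ := by ring
  have final := main t le_rfl
  -- identify σ' 0 and σ' t
  have hσ0 : σ' 0 = ⊥ := by
    rw [hσeq 0 (by omega), show (⟨0, by omega⟩ : Fin (t + 1)) = 0 from Fin.ext rfl, h0]
  have hσt : σ' t = ⊤ := by
    rw [hσeq t (by omega), show (⟨t, by omega⟩ : Fin (t + 1)) = Fin.last t from Fin.ext rfl, htop]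
  have hdt : Set.ncard {z : G | Subgroup.closure {g, z} ⊔ σ' t = ⊤} = Nat.card G := by
    rw [hσt]
    have : {z : G | Subgroup.closure {g, z} ⊔ ⊤ = ⊤} = Set.univ := by
      ext z; simp
    rw [this, Set.ncard_univ]
  have hd0 : {z : G | Subgroup.closure {g, z} ⊔ σ' 0 = ⊤} =
      {z : G | Subgroup.closure {g, z} = ⊤} := by
    rw [hσ0]; ext z; simp
  -- product juggling
  have hprod : (∏ j ∈ Finset.range t, Nat.card (σ' (j + 1))) =
      (∏ j ∈ Finset.range t, Nat.card (σ' j)) * Nat.card G := by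
    have e1 := Finset.prod_range_succ (fun j => Nat.card (σ' j)) t
    have e2 := Finset.prod_range_succ' (fun j => Nat.card (σ' j)) t
    rw [e1] at e2
    rw [hσ0, Subgroup.card_bot, mul_one] at e2
    rw [hσt, Subgroup.card_top] at e2
    omega
  rw [hd0, hdt, hprod] at final
  -- convert Fin products to range products
  have hp1 : ∏ i : Fin t, Nat.card (σ i.castSucc) = ∏ j ∈ Finset.range t, Nat.card (σ' j) := by
    rw [← Fin.prod_univ_eq_prod_range (fun j => Nat.card (σ' j)) t]
    refine Finset.prod_congr rfl fun i _ => ?_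
    rw [hσeq i.val (by omega)]
    exact congrArg (fun K : Subgroup G => Nat.card K) (congrArg σ (Fin.ext rfl))
  have hp2 : ∏ i : Fin t, Set.ncard
        {n : G | n ∈ σ i.succ ∧ Subgroup.closure {g, x i * n} ⊔ σ i.castSucc = ⊤} =
      ∏ j ∈ Finset.range t, Set.ncard
        {n : G | n ∈ σ' (j + 1) ∧ Subgroup.closure {g, x' j * n} ⊔ σ' j = ⊤} := by
    rw [← Fin.prod_univ_eq_prod_range (fun j => Set.ncard
        {n : G | n ∈ σ' (j + 1) ∧ Subgroup.closure {g, x' j * n} ⊔ σ' j = ⊤}) t]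
    refine Finset.prod_congr rfl fun i _ => ?_
    congr 1
    rw [hσeq (i.val + 1) (by omega), hσeq i.val (by omega), hxeq i.val i.isLt]
    ext n
    have e1 : σ i.succ = σ ⟨i.val + 1, by omega⟩ := congrArg σ (Fin.ext rfl)
    have e2 : σ i.castSucc = σ ⟨i.val, by omega⟩ := congrArg σ (Fin.ext rfl)
    have e3 : x i = x ⟨i.val, i.isLt⟩ := congrArg x (Fin.ext rfl)
    rw [e1, e2, e3]
  rw [hp1, hp2]
  have hGpos : 0 < Nat.card G := Nat.card_pos
  have := final
  -- final : d0 * (P * |G|) = |G| * C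
  apply Nat.eq_of_mul_eq_mul_right hGpos
  calc Set.ncard {z : G | Subgroup.closure {g, z} = ⊤} *
        (∏ j ∈ Finset.range t, Nat.card (σ' j)) * Nat.card G
      = Set.ncard {z : G | Subgroup.closure {g, z} = ⊤} *
        ((∏ j ∈ Finset.range t, Nat.card (σ' j)) * Nat.card G) := by ring
    _ = Nat.card G * ∏ j ∈ Finset.range t, Set.ncard
          {n : G | n ∈ σ' (j + 1) ∧ Subgroup.closure {g, x' j * n} ⊔ σ' j = ⊤} := final
    _ = _ := by ring
end
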